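/- arXiv:1706.02951 — 6 statements merged into one kernel-verified Lean document; each statement's English description precedes it below -/
import Mathlib

section
/- Let X be a nonzero complex Banach space, 𝒩 a nest on X, n ≥ 2, and L : Alg 𝒩 → B(X) a Lie n-derivation. Then L(I) = λI for some λ ∈ ℂ. -/
open scoped Classical

set_option synthInstance.maxHeartbeats 1000000
set_option maxHeartbeats 1000000

noncomputable section

/-- The `(n-1)`-th commutator polynomial `p_n(x_1, …, x_n)`, defined recursively by
`p_1(x_1) = x_1` and `p_k(x_1, …, x_k) = [p_{k-1}(x_1, …, x_{k-1}), x_k]`. -/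
def commPoly {A : Type*} [NonUnitalNonAssocRing A] : (n : ℕ) → (Fin n → A) → A
  | 0, _ => 0
  | 1, a => a 0
  | n + 2, a =>
      commPoly (n + 1) (fun i => a i.castSucc) * a (Fin.last (n + 1)) -
        a (Fin.last (n + 1)) * commPoly (n + 1) (fun i => a i.castSucc)

/-- A nest of closed subspaces of `X`: it contains `{0}` and `X`, is totally ordered by
inclusion, is closed under arbitrary intersections, and contains the norm-closed linear
span of the union of any subfamily. -/
structure IsNest {X : Type*} [NormedAddCommGroup X] [NormedSpace ℂ X]
    (𝒩 : Set (Submodule ℂ X)) : Prop where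
  closed : ∀ N ∈ 𝒩, IsClosed (N : Set X)
  bot_mem : (⊥ : Submodule ℂ X) ∈ 𝒩
  top_mem : (⊤ : Submodule ℂ X) ∈ 𝒩
  total : ∀ N₁ ∈ 𝒩, ∀ N₂ ∈ 𝒩, N₁ ≤ N₂ ∨ N₂ ≤ N₁
  sInf_mem : ∀ S ⊆ 𝒩, sInf S ∈ 𝒩
  closure_sSup_mem : ∀ S ⊆ 𝒩, (sSup S).topologicalClosure ∈ 𝒩

/-- The nest algebra `Alg 𝒩` of all bounded operators leaving every member of `𝒩`
invariant. -/
def nestAlgebra {X : Type*} [NormedAddCommGroup X] [NormedSpace ℂ X]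
    (𝒩 : Set (Submodule ℂ X)) : Subalgebra ℂ (X →L[ℂ] X) where
  carrier := {T : X →L[ℂ] X | ∀ N ∈ 𝒩, ∀ x ∈ N, T x ∈ N}
  mul_mem' := fun {a b} ha hb N hN x hx => ha N hN _ (hb N hN x hx)
  one_mem' := fun N _ x hx => hx
  add_mem' := fun {a b} ha hb N hN x hx => N.add_mem (ha N hN x hx) (hb N hN x hx)
  zero_mem' := fun N _ _ _ => N.zero_mem
  algebraMap_mem' := fun r N hN x hx => by
    simpa [Algebra.algebraMap_eq_smul_one] using N.smul_mem r hx

/-- `L` is a Lie `n`-derivation on the subalgebra `𝒜` of `B`: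
`L(p_n(a_1,…,a_n)) = ∑_k p_n(a_1, …, a_{k-1}, L(a_k), a_{k+1}, …, a_n)`. -/
def IsLieNDeriv {B : Type*} [Ring B] [Algebra ℂ B] (𝒜 : Subalgebra ℂ B)
    (n : ℕ) (L : ↥𝒜 →ₗ[ℂ] B) : Prop :=
  ∀ a : Fin n → ↥𝒜,
    L (commPoly n a) =
      ∑ k : Fin n, commPoly n (Function.update (fun i => ((a i : B))) k (L (a k)))


/-!
Feeding `(I, A₁, …, Aₙ₋₁)` into the defining identity of `L` kills every term but
`pₙ(L(I), A₁, …, Aₙ₋₁)`, because a commutator polynomial whose first two entries commute vanishes.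
If `pₖ₊₂(L(I), A₁, …, Aₖ, B) = 0` for all `B ∈ Alg 𝒩`, then `pₖ₊₁(L(I), A₁, …, Aₖ)` commutes with
`Alg 𝒩`. The commutant of a nest algebra consists of scalars, as it has to commute with enough
rank-one operators `x ⊗ f`; and a nonzero scalar is never a commutator in a normed algebra
(Wielandt–Wintner), so `pₖ₊₁(L(I), A₁, …, Aₖ) = 0`. Descending to `k = 1`, `L(I)` itself commutes
with `Alg 𝒩`, hence is a scalar.
-/

theorem Submodule.exists_strongDual_eq_one_of_notMem {𝕜 E : Type*} [RCLike 𝕜]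
    [NormedAddCommGroup E] [NormedSpace 𝕜 E] {M : Submodule 𝕜 E} (hM : IsClosed (M : Set E))
    {z : E} (hz : z ∉ M) : ∃ f : StrongDual 𝕜 E, (∀ y ∈ M, f y = 0) ∧ f z = 1 := by
  have : IsClosed (M : Set E) := hM
  obtain ⟨g, hg⟩ := SeparatingDual.exists_eq_one (R := 𝕜)
    (mt (Submodule.Quotient.mk_eq_zero M).mp hz)
  exact ⟨g.comp M.mkQL, fun y hy => by simp [(Submodule.Quotient.mk_eq_zero M).mpr hy], hg⟩

theorem mul_pow_succ_sub_pow_succ_mul {R : Type*} [Ring R] {a b : R} (h : a * b - b * a = 1)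
    (k : ℕ) : a * b ^ (k + 1) - b ^ (k + 1) * a = (k + 1) • b ^ k := by
  induction k with
  | zero => simpa using h
  | succ k ih =>
    calc a * b ^ (k + 2) - b ^ (k + 2) * a
        = (a * b ^ (k + 1) - b ^ (k + 1) * a) * b + b ^ (k + 1) * (a * b - b * a) := by
          rw [pow_succ _ (k + 1)]; noncomm_ring
      _ = (k + 2) • b ^ (k + 1) := by
          rw [ih, h, mul_one, smul_mul_assoc, ← pow_succ, ← succ_nsmul]

theorem eq_zero_of_mul_sub_mul_eq_smul_one {𝕜 B : Type*} [RCLike 𝕜] [NormedRing B]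
    [NormedAlgebra 𝕜 B] [Nontrivial B] {a b : B} {c : 𝕜} (h : a * b - b * a = c • 1) :
    c = 0 := by
  by_contra hc
  set a' := c⁻¹ • a
  have h1 : a' * b - b * a' = 1 := by
    rw [smul_mul_assoc, mul_smul_comm, ← smul_sub, h, smul_smul, inv_mul_cancel₀ hc, one_smul]
  have key (k : ℕ) : a' * b ^ (k + 1) - b ^ (k + 1) * a' = ((k + 1 : ℕ) : 𝕜) • b ^ k := by
    rw [Nat.cast_smul_eq_nsmul, mul_pow_succ_sub_pow_succ_mul h1]
  have hpow (k : ℕ) : b ^ k ≠ 0 := by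
    induction k with
    | zero => simp
    | succ k ih =>
      intro hk
      have := key k
      rw [hk, zero_mul, mul_zero, sub_zero, eq_comm, smul_eq_zero] at this
      exact this.elim (Nat.cast_ne_zero.mpr k.succ_ne_zero) ih
  have hbound (k : ℕ) : (k : ℝ) + 1 ≤ 2 * ‖a'‖ * ‖b‖ := by
    have hk : 0 < ‖b ^ k‖ := norm_pos_iff.mpr (hpow k)
    refine le_of_mul_le_mul_right ?_ hk
    calc ((k : ℝ) + 1) * ‖b ^ k‖ = ‖a' * b ^ (k + 1) - b ^ (k + 1) * a'‖ := by
          rw [key, norm_smul, RCLike.norm_natCast]; push_cast; ring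
      _ ≤ ‖a'‖ * ‖b ^ (k + 1)‖ + ‖b ^ (k + 1)‖ * ‖a'‖ :=
          (norm_sub_le _ _).trans (add_le_add (norm_mul_le _ _) (norm_mul_le _ _))
      _ ≤ ‖a'‖ * (‖b‖ * ‖b ^ k‖) + ‖b‖ * ‖b ^ k‖ * ‖a'‖ := by
          have : ‖b ^ (k + 1)‖ ≤ ‖b‖ * ‖b ^ k‖ := by rw [pow_succ']; exact norm_mul_le _ _
          gcongr
      _ = 2 * ‖a'‖ * ‖b‖ * ‖b ^ k‖ := by ring
  obtain ⟨k, hk⟩ := exists_nat_gt (2 * ‖a'‖ * ‖b‖)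
  linarith [hbound k]

section CommPoly

variable {A : Type*} [Ring A]

theorem commPoly_add_two (m : ℕ) (a : Fin (m + 2) → A) :
    commPoly (m + 2) a =
      commPoly (m + 1) (Fin.init a) * a (Fin.last (m + 1)) -
        a (Fin.last (m + 1)) * commPoly (m + 1) (Fin.init a) := rfl

theorem commPoly_eq_zero_of_commute :
    ∀ (m : ℕ) (a : Fin (m + 2) → A), Commute (a 0) (a 1) → commPoly (m + 2) a = 0
  | 0, a, h => sub_eq_zero.mpr h.eq
  | m + 1, a, h => by
    rw [commPoly_add_two, commPoly_eq_zero_of_commute m (Fin.init a) h, zero_mul, mul_zero,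
      sub_self]

theorem commPoly_cons_snoc (m : ℕ) (t s : A) (a : Fin (m + 1) → A) :
    commPoly (m + 3) (Fin.cons t (Fin.snoc a s)) =
      commPoly (m + 2) (Fin.cons t a) * s - s * commPoly (m + 2) (Fin.cons t a) := by
  rw [Fin.cons_snoc_eq_snoc_cons, commPoly_add_two, Fin.init_snoc, Fin.snoc_last]

end CommPoly

theorem mem_centralizer_of_commPoly_cons_eq_zero {𝕜 B : Type*} [RCLike 𝕜] [NormedRing B]
    [NormedAlgebra 𝕜 B] [Nontrivial B] {S : Set B}
    (hS : ∀ z ∈ S.centralizer, ∃ c : 𝕜, z = c • 1) {t : B} :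
    ∀ k : ℕ, (∀ a : Fin (k + 1) → B, (∀ i, a i ∈ S) → commPoly (k + 2) (Fin.cons t a) = 0) →
      t ∈ S.centralizer
  | 0, h => fun s hs => (sub_eq_zero.mp (h (fun _ => s) fun _ => hs)).symm
  | k + 1, h => by
    refine mem_centralizer_of_commPoly_cons_eq_zero hS k fun a ha => ?_
    set p := commPoly (k + 2) (Fin.cons t a)
    have hp : p ∈ S.centralizer := fun s hs => by
      have := h (Fin.snoc a s) fun i =>
        Fin.lastCases (by simpa using hs) (fun j => by simpa using ha j) i
      rw [commPoly_cons_snoc] at this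
      exact (sub_eq_zero.mp this).symm
    obtain ⟨c, hc⟩ := hS p hp
    -- `p` is itself a commutator, so the scalar `c` vanishes
    have hc0 : c = 0 :=
      eq_zero_of_mul_sub_mul_eq_smul_one (hc.symm.trans (commPoly_add_two _ _)).symm
    rw [hc, hc0, zero_smul]

theorem IsLieNDeriv.commPoly_cons_map_one_eq_zero {B : Type*} [Ring B] [Algebra ℂ B]
    {𝒜 : Subalgebra ℂ B} {m : ℕ} {L : 𝒜 →ₗ[ℂ] B} (hL : IsLieNDeriv 𝒜 (m + 2) L)
    (a : Fin (m + 1) → 𝒜) : commPoly (m + 2) (Fin.cons (L 1) fun i => (a i : B)) = 0 := by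
  have h := hL (Fin.cons 1 a)
  rw [commPoly_eq_zero_of_commute m _ (Commute.one_left _), map_zero,
    Fintype.sum_eq_single 0 fun k hk => commPoly_eq_zero_of_commute m _ ?_] at h
  · convert h.symm using 2
    ext i
    refine Fin.cases ?_ (fun j => ?_) i <;> simp
  · rw [Function.update_of_ne hk.symm]
    exact Commute.one_left _

section NestAlgebra

variable {X : Type*} [NormedAddCommGroup X] [NormedSpace ℂ X] {𝒩 : Set (Submodule ℂ X)}

theorem smulRight_mem_nestAlgebra {f : StrongDual ℂ X} {x : X}
    (h : ∀ M ∈ 𝒩, (∀ y ∈ M, f y = 0) ∨ x ∈ M) : f.smulRight x ∈ nestAlgebra 𝒩 := by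
  intro M hM y hy
  rcases h M hM with hf | hx
  · simp [hf y hy]
  · exact M.smul_mem _ hx

theorem IsNest.smulRight_mem_nestAlgebra_of_mem (hnest : IsNest 𝒩) {N : Submodule ℂ X} (hN : N ∈ 𝒩)
    {f : StrongDual ℂ X} (hf : ∀ y ∈ N, f y = 0) {x : X} (hx : x ∈ N) :
    f.smulRight x ∈ nestAlgebra 𝒩 :=
  smulRight_mem_nestAlgebra fun M hM =>
    (hnest.total M hM N hN).imp (fun hMN y hy => hf y (hMN hy)) (fun hNM => hNM hx)

theorem apply_eq_smul_of_commute_smulRight {T : X →L[ℂ] X} {f : StrongDual ℂ X} {x z : X}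
    (hT : f.smulRight x * T = T * f.smulRight x) (hz : f z = 1) : T x = f (T z) • x := by
  simpa [hz] using (DFunLike.congr_fun hT z).symm

variable {T : X →L[ℂ] X}

theorem IsNest.exists_forall_apply_eq_smul_of_mem_centralizer (hnest : IsNest 𝒩)
    (hT : T ∈ (nestAlgebra 𝒩 : Set (X →L[ℂ] X)).centralizer) {M : Submodule ℂ X} (hM : M ∈ 𝒩)
    (hMtop : M ≠ ⊤) : ∃ c : ℂ, ∀ x ∈ M, T x = c • x := by
  obtain ⟨z, hz⟩ : ∃ z, z ∉ M := by simpa [Submodule.eq_top_iff'] using hMtop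
  obtain ⟨f, hfM, hfz⟩ := M.exists_strongDual_eq_one_of_notMem (hnest.closed M hM) hz
  exact ⟨f (T z), fun x hx =>
    apply_eq_smul_of_commute_smulRight
      (hT _ (hnest.smulRight_mem_nestAlgebra_of_mem hM hfM hx)) hfz⟩

theorem IsNest.exists_eq_smul_one_of_mem_centralizer [Nontrivial X] (hnest : IsNest 𝒩)
    (hT : T ∈ (nestAlgebra 𝒩 : Set (X →L[ℂ] X)).centralizer) : ∃ c : ℂ, T = c • 1 := by
  set 𝒮 : Set (Submodule ℂ X) := {M ∈ 𝒩 | M ≠ ⊤}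
  set K := (sSup 𝒮).topologicalClosure
  have hK : K ∈ 𝒩 := hnest.closure_sSup_mem 𝒮 fun M hM => hM.1
  have hle {M} (hM : M ∈ 𝒩) (hMtop : M ≠ ⊤) : M ≤ K :=
    (le_sSup (show M ∈ 𝒮 from ⟨hM, hMtop⟩)).trans (Submodule.le_topologicalClosure _)
  -- either the proper members span a dense subspace, or `K` is the largest proper member
  by_cases hKtop : K = ⊤
  · obtain ⟨N, hN, hNtop, x₀, hx₀N, hx₀⟩ : ∃ N ∈ 𝒩, N ≠ ⊤ ∧ ∃ x ∈ N, x ≠ 0 := by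
      by_contra! hbot
      have : K ≤ ⊥ := Submodule.topologicalClosure_minimal (sSup 𝒮)
        (sSup_le fun M hM => ((Submodule.eq_bot_iff M).mpr (hbot M hM.1 hM.2)).le)
        (hnest.closed ⊥ hnest.bot_mem)
      exact bot_ne_top (eq_bot_iff.mpr this ▸ hKtop)
    obtain ⟨c, hc⟩ := hnest.exists_forall_apply_eq_smul_of_mem_centralizer hT hN hNtop
    -- the scalars on two comparable members agree on a common nonzero vector
    have hproper {M} (hM : M ∈ 𝒩) (hMtop : M ≠ ⊤) :
        M ≤ LinearMap.ker ((T - c • 1 : X →L[ℂ] X) : X →ₗ[ℂ] X) := by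
      intro x hx
      rw [LinearMap.mem_ker, ContinuousLinearMap.coe_coe, sub_apply, sub_eq_zero]
      rcases hnest.total M hM N hN with hMN | hNM
      · simpa using hc x (hMN hx)
      · obtain ⟨d, hd⟩ := hnest.exists_forall_apply_eq_smul_of_mem_centralizer hT hM hMtop
        have hdc : d = c := smul_left_injective ℂ hx₀ ((hd x₀ (hNM hx₀N)).symm.trans (hc x₀ hx₀N))
        simpa [hdc] using hd x hx
    have hKker := Submodule.topologicalClosure_minimal (sSup 𝒮)
      (sSup_le fun M hM => hproper hM.1 hM.2) (T - c • 1).isClosed_ker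
    refine ⟨c, ContinuousLinearMap.ext fun x => ?_⟩
    have := hKker (hKtop ▸ Submodule.mem_top : x ∈ K)
    simpa [sub_eq_zero] using this
  · obtain ⟨z, hz⟩ : ∃ z, z ∉ K := by simpa [Submodule.eq_top_iff'] using hKtop
    obtain ⟨f, hfK, hfz⟩ := K.exists_strongDual_eq_one_of_notMem (hnest.closed K hK) hz
    have hmem (u : X) : f.smulRight u ∈ nestAlgebra 𝒩 := smulRight_mem_nestAlgebra fun M hM => by
      by_cases hMtop : M = ⊤
      · exact Or.inr (hMtop ▸ Submodule.mem_top)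
      · exact Or.inl fun y hy => hfK y (hle hM hMtop hy)
    exact ⟨f (T z), ContinuousLinearMap.ext fun u => by
      simpa using apply_eq_smul_of_commute_smulRight (hT _ (hmem u)) hfz⟩

end NestAlgebra

theorem statement4_general {X : Type*} [NormedAddCommGroup X] [NormedSpace ℂ X]
    [Nontrivial X]
    (𝒩 : Set (Submodule ℂ X)) (hnest : IsNest 𝒩)
    (n : ℕ) (hn : 2 ≤ n)
    (L : ↥(nestAlgebra 𝒩) →ₗ[ℂ] (X →L[ℂ] X))
    (hL : IsLieNDeriv (nestAlgebra 𝒩) n L) :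
    ∃ lam : ℂ, L 1 = lam • (1 : X →L[ℂ] X) := by
  obtain ⟨m, rfl⟩ := Nat.exists_eq_add_of_le' hn
  refine hnest.exists_eq_smul_one_of_mem_centralizer <|
    mem_centralizer_of_commPoly_cons_eq_zero (fun _ => hnest.exists_eq_smul_one_of_mem_centralizer)
      m fun a ha => ?_
  exact hL.commPoly_cons_map_one_eq_zero fun i => ⟨a i, ha i⟩

/-- Let `X` be a nonzero complex Banach space, `𝒩` a nest on `X`,
`n ≥ 2`, and `L : Alg 𝒩 → B(X)` a Lie `n`-derivation.  Then `L(I) = λ I` for some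
`λ ∈ ℂ`. -/
theorem statement4 {X : Type*} [NormedAddCommGroup X] [NormedSpace ℂ X]
    [CompleteSpace X] [Nontrivial X]
    (𝒩 : Set (Submodule ℂ X)) (hnest : IsNest 𝒩)
    (n : ℕ) (hn : 2 ≤ n)
    (L : ↥(nestAlgebra 𝒩) →ₗ[ℂ] (X →L[ℂ] X))
    (hL : IsLieNDeriv (nestAlgebra 𝒩) n L) :
    ∃ lam : ℂ, L 1 = lam • (1 : X →L[ℂ] X) :=
  statement4_general 𝒩 hnest n hn L hL
end
end

section
/- Let 𝒩 be a nest on a complex Banach space X with dim X_-^⊥ = 1, and let 𝒜 be a subalgebra of Alg 𝒩 satisfying (♠1) and (♠5). Then {T ∈ B(X) : TA = AT for all A ∈ 𝒜} = ℂI. -/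
open scoped Classical

set_option synthInstance.maxHeartbeats 1000000
set_option maxHeartbeats 1000000

noncomputable section

/-- `X₋` : the norm-closed linear span of the union of all members of `𝒩` different
from `X`. -/
def nestXminus {X : Type*} [NormedAddCommGroup X] [NormedSpace ℂ X]
    (𝒩 : Set (Submodule ℂ X)) : Submodule ℂ X :=
  (sSup {N | N ∈ 𝒩 ∧ N ≠ (⊤ : Submodule ℂ X)}).topologicalClosure

/-- The annihilator of a subspace `S` of `X` inside the continuous dual `X*`. -/
def annihilatorOf {X : Type*} [NormedAddCommGroup X] [NormedSpace ℂ X]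
    (S : Submodule ℂ X) : Submodule ℂ (X →L[ℂ] ℂ) where
  carrier := {f | ∀ x ∈ S, f x = 0}
  add_mem' := fun {f g} hf hg x hx => by simp [hf x hx, hg x hx]
  zero_mem' := fun x _ => by simp
  smul_mem' := fun c f hf x hx => by simp [hf x hx]

/-- `X(𝒜)` : the set of `x ∈ X` such that `x ⊗ f ∈ 𝒜` for some nonzero `f ∈ X*`.
Here `x ⊗ f` is the rank-one operator `y ↦ f(y) x`, i.e. `f.smulRight x`. -/
def XofA {X : Type*} [NormedAddCommGroup X] [NormedSpace ℂ X]
    (𝒜 : NonUnitalSubalgebra ℂ (X →L[ℂ] X)) : Set X :=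
  {x | ∃ f : X →L[ℂ] ℂ, f ≠ 0 ∧ f.smulRight x ∈ 𝒜}

/-- `X₋^⊥(𝒜)` : the set of `f ∈ X₋^⊥` such that `x ⊗ f ∈ 𝒜` for some nonzero
`x ∈ X`. -/
def XannA {X : Type*} [NormedAddCommGroup X] [NormedSpace ℂ X]
    (𝒩 : Set (Submodule ℂ X)) (𝒜 : NonUnitalSubalgebra ℂ (X →L[ℂ] X)) :
    Set (X →L[ℂ] ℂ) :=
  {f | (∀ x ∈ nestXminus 𝒩, f x = 0) ∧ ∃ x : X, x ≠ 0 ∧ f.smulRight x ∈ 𝒜}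

lemma eig_scalar {X : Type*} [AddCommGroup X] [Module ℂ X] (T : X →ₗ[ℂ] X)
    (h : ∀ x : X, ∃ c : ℂ, T x = c • x) : ∃ c : ℂ, ∀ x : X, T x = c • x := by
  by_cases hx0 : ∀ x : X, x = 0
  · exact ⟨0, fun x => by rw [hx0 x]; simp⟩
  · push_neg at hx0
    obtain ⟨x₀, hx₀⟩ := hx0
    obtain ⟨c₀, hc₀⟩ := h x₀
    refine ⟨c₀, fun x => ?_⟩
    by_cases hx : x = 0
    · simp [hx]
    obtain ⟨a, ha⟩ := h x
    obtain ⟨b, hb⟩ := h (x + x₀)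
    have key : (a - b) • x = (b - c₀) • x₀ := by
      have := hb
      rw [map_add, ha, hc₀, smul_add] at this
      rw [sub_smul, sub_smul]
      linear_combination (norm := module) this
    by_cases hbc : b = c₀
    · have hab : a = b := by
        have : (a - b) • x = 0 := by rw [key, hbc, sub_self, zero_smul]
        have := smul_eq_zero.mp this
        rcases this with h1 | h1
        · exact sub_eq_zero.mp h1
        · exact absurd h1 hx
      rw [ha, hab, hbc]
    · have hx₀x : x₀ = ((b - c₀)⁻¹ * (a - b)) • x := by
        rw [mul_smul, key, inv_smul_smul₀ (sub_ne_zero.mpr hbc)]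
      have : T x₀ = a • x₀ := by
        rw [hx₀x, map_smul, ha, smul_comm]
      rw [hc₀] at this
      have : (a - c₀) • x₀ = 0 := by
        rw [sub_smul, this, sub_self]
      rcases smul_eq_zero.mp this with h1 | h1
      · rw [ha, sub_eq_zero.mp h1]
      · exact absurd h1 hx₀

/-- Let `𝒩` be a nest on a complex Banach space `X` with
`dim X₋^⊥ = 1`, and let `𝒜` be a subalgebra of `Alg 𝒩` satisfying (♠1) and (♠5).
Then `{T ∈ B(X) : TA = AT for all A ∈ 𝒜} = ℂ I`. -/
theorem statement5 {X : Type*} [NormedAddCommGroup X] [NormedSpace ℂ X] [CompleteSpace X]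
    (𝒩 : Set (Submodule ℂ X)) (hnest : IsNest 𝒩)
    (hdimann : Module.rank ℂ ↥(annihilatorOf (nestXminus 𝒩)) = 1)
    (𝒜 : NonUnitalSubalgebra ℂ (X →L[ℂ] X))
    (h𝒜 : ∀ T ∈ 𝒜, T ∈ nestAlgebra 𝒩)
    -- (♠1) : `X₋^⊥(𝒜) ≠ {0}` and `X₋^⊥(𝒜)` is a linear subspace of `X*`
    (hS1 : XannA 𝒩 𝒜 ≠ ({0} : Set (X →L[ℂ] ℂ)) ∧
      ∃ p : Submodule ℂ (X →L[ℂ] ℂ), (p : Set (X →L[ℂ] ℂ)) = XannA 𝒩 𝒜)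
    -- (♠5) : `X(𝒜) = X`
    (hS5 : XofA 𝒜 = Set.univ) :
    {T : X →L[ℂ] X | ∀ a : ↥𝒜, T * (a : X →L[ℂ] X) = (a : X →L[ℂ] X) * T} =
      {T : X →L[ℂ] X | ∃ c : ℂ, T = c • (1 : X →L[ℂ] X)} := by

  ext T
  simp only [Set.mem_setOf_eq]
  constructor
  · intro hT
    have heig : ∀ x : X, ∃ c : ℂ, T x = c • x := by
      intro x
      have hx : x ∈ XofA 𝒜 := by rw [hS5]; trivial
      obtain ⟨f, hf, hmem⟩ := hx
      obtain ⟨y, hy⟩ : ∃ y, f y ≠ 0 := by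
        by_contra hc
        push_neg at hc
        exact hf (ContinuousLinearMap.ext fun y => by simp [hc y])
      have hcomm := hT ⟨f.smulRight x, hmem⟩
      have := congrFun (congrArg (fun (S : X →L[ℂ] X) => (S : X → X)) hcomm) y
      simp only [ContinuousLinearMap.mul_apply, ContinuousLinearMap.smulRight_apply] at this
      -- this : T (f y • x) = f (T y) • x
      rw [map_smul] at this
      refine ⟨(f y)⁻¹ * f (T y), ?_⟩
      rw [mul_smul, ← this, inv_smul_smul₀ hy]
    obtain ⟨c, hc⟩ := eig_scalar (T.toLinearMap) (fun x => heig x)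
    exact ⟨c, ContinuousLinearMap.ext fun x => by simpa using hc x⟩
  · rintro ⟨c, rfl⟩ a
    ext x
    simp [mul_comm]
end
end

section
/- Let X be a complex Banach space with dim X = 2 and let 𝒩 = {{0}, N, X} be a non-trivial nest on X. Then for every n ≥ 2 and every Lie n-derivation L : Alg 𝒩 → B(X) there exist a derivation D : Alg 𝒩 → B(X) and a linear map H : Alg 𝒩 → ℂI vanishing on every (n−1)-th commutator p_n(A_1,…,A_n) with A_1,…,A_n ∈ Alg 𝒩 such that L = D + H; moreover, if L is continuous then D and H can be chosen continuous. -/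
open scoped Classical

set_option synthInstance.maxHeartbeats 1000000
set_option maxHeartbeats 1000000

noncomputable section

/-- `D` is an (associative) derivation on the subalgebra `𝒜` of `B`. -/
def IsDerivOn {B : Type*} [Ring B] [Algebra ℂ B] (𝒜 : Subalgebra ℂ B)
    (D : ↥𝒜 →ₗ[ℂ] B) : Prop :=
  ∀ a b : ↥𝒜, D (a * b) = D a * (b : B) + (a : B) * D b


/-! In a basis `b₀ ∈ N`, `b₁ ∉ N` of `X`, the algebra `B(X)` becomes the algebra of `2 × 2`
matrices and `Alg 𝒩` the upper triangular ones, spanned by `E₀₀`, `E₀₁`, `E₁₁`. On the tuples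
`(E₀₁, E₁₁, …, E₁₁)`, `(E₀₁, E₀₀, …, E₀₀)`, `(E₀₀, E₁₁, …, E₁₁)` and `(E₀₁, E₁₁, …, E₁₁, E₀₁)`
both sides of the Lie `n`-derivation identity can be computed in closed form, because
`[·, E₀₀]` and `[·, E₁₁]` act diagonally on matrix units. Comparing entries yields linear
relations among the entries of `L E₀₀`, `L E₀₁`, `L E₁₁`, which say precisely that
`L A - [T, A] = (c₀ A₀₀ + c₁ A₁₁) I` for an explicit `T`. The scalar part vanishes on
commutators, since commutators of upper triangular matrices have zero diagonal. -/

section CommPoly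

attribute [local instance] LieRing.ofAssociativeRing

variable {R : Type*} [Ring R]

theorem commPoly_snoc {n : ℕ} (a : Fin (n + 1) → R) (x : R) :
    commPoly (n + 2) (Fin.snoc a x) = ⁅commPoly (n + 1) a, x⁆ := by
  simp [commPoly, Ring.lie_def]

theorem map_commPoly {R' : Type*} [Ring R'] (f : R →+* R') :
    ∀ (n : ℕ) (a : Fin n → R), f (commPoly n a) = commPoly n fun i => f (a i)
  | 0, a => by simp [commPoly]
  | 1, a => by simp [commPoly]
  | n + 2, a => by simp only [commPoly, map_sub, map_mul, map_commPoly f (n + 1)]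

-- The right-hand side of the identity defining `IsLieNDeriv`, with `d k` in place of `L (a k)`.
def commPolyLeibniz (n : ℕ) (a d : Fin n → R) : R :=
  ∑ k, commPoly n (Function.update a k (d k))

theorem commPolyLeibniz_one (a d : Fin 1 → R) : commPolyLeibniz 1 a d = d 0 := by
  simp [commPolyLeibniz, commPoly]

theorem commPolyLeibniz_snoc {n : ℕ} (a d : Fin (n + 1) → R) (x y : R) :
    commPolyLeibniz (n + 2) (Fin.snoc a x) (Fin.snoc d y) =
      ⁅commPolyLeibniz (n + 1) a d, x⁆ + ⁅commPoly (n + 1) a, y⁆ := by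
  simp [commPolyLeibniz, Fin.sum_univ_castSucc, ← Fin.snoc_update, Fin.update_snoc_last,
    commPoly_snoc, add_lie, sum_lie]

theorem map_commPolyLeibniz {R' : Type*} [Ring R'] (f : R →+* R') (n : ℕ) (a d : Fin n → R) :
    f (commPolyLeibniz n a d) = commPolyLeibniz n (fun i => f (a i)) (fun i => f (d i)) := by
  simp only [commPolyLeibniz, map_sum, map_commPoly]
  refine Finset.sum_congr rfl fun k _ => congrArg _ (funext fun i => ?_)
  by_cases h : i = k <;> simp [h]

theorem Fin.cons_const_eq_snoc {α : Type*} {k : ℕ} (x y : α) :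
    (Fin.cons x fun _ : Fin (k + 1) => y : Fin (k + 2) → α) =
      Fin.snoc (Fin.cons x fun _ : Fin k => y : Fin (k + 1) → α) y := by
  rw [← Fin.cons_snoc_eq_snoc_cons]
  congr 1
  funext i
  refine Fin.lastCases ?_ (fun j => ?_) i <;> simp

theorem Fin.cons_const_comp {α β : Type*} {k : ℕ} (f : α → β) (x y : α) :
    (fun i => f ((Fin.cons x fun _ => y : Fin (k + 1) → α) i)) =
      Fin.cons (f x) fun _ => f y := by
  funext i
  refine Fin.cases ?_ (fun j => ?_) i <;> simp

theorem Fin.snoc_cons_const_comp {α β : Type*} {k : ℕ} (f : α → β) (x y z : α) :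
    (fun i => f ((Fin.snoc (Fin.cons x fun _ => y : Fin (k + 1) → α) z : Fin (k + 2) → α) i)) =
      Fin.snoc (Fin.cons (f x) fun _ => f y) (f z) := by
  funext i
  refine Fin.lastCases ?_ (fun j => ?_) i
  · simp
  · simp only [Fin.snoc_castSucc]
    exact congrFun (Fin.cons_const_comp f x y) j

variable {K : Type*} [CommRing K] [Algebra K R]

theorem commPoly_cons_const {x y : R} {c : K} (h : ⁅x, y⁆ = c • x) :
    ∀ k : ℕ, commPoly (k + 1) (Fin.cons x fun _ => y) = c ^ k • x
  | 0 => by simp [commPoly]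
  | k + 1 => by
    rw [Fin.cons_const_eq_snoc, commPoly_snoc, commPoly_cons_const h k, smul_lie, h, smul_smul,
      pow_succ]

theorem commPolyLeibniz_cons_const_succ {x y : R} {c : K} (h : ⁅x, y⁆ = c • x) (dx dy : R)
    (k : ℕ) :
    commPolyLeibniz (k + 2) (Fin.cons x fun _ => y) (Fin.cons dx fun _ => dy) =
      ⁅commPolyLeibniz (k + 1) (Fin.cons x fun _ => y) (Fin.cons dx fun _ => dy), y⁆ +
        c ^ k • ⁅x, dy⁆ := by
  rw [Fin.cons_const_eq_snoc, Fin.cons_const_eq_snoc, commPolyLeibniz_snoc,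
    commPoly_cons_const h, smul_lie]

end CommPoly

section LieNDeriv

attribute [local instance] LieRing.ofAssociativeRing

variable {B M : Type*} [Ring B] [Algebra ℂ B] [Ring M] [Algebra ℂ M]
  {𝒜 : Subalgebra ℂ B} {L : 𝒜 →ₗ[ℂ] B}

theorem IsLieNDeriv.map_apply_commPoly {n : ℕ} (hL : IsLieNDeriv 𝒜 n L) (φ : B →ₐ[ℂ] M)
    (a : Fin n → 𝒜) :
    φ (L (commPoly n a)) = commPolyLeibniz n (fun i => φ (a i)) (fun i => φ (L (a i))) :=
  (congrArg φ (hL a)).trans (map_commPolyLeibniz φ.toRingHom n _ _)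

variable {φ : B →ₐ[ℂ] M} {x y : 𝒜} {c : ℂ}

theorem lie_eq_smul_of_map (hφ : Function.Injective φ) (h : ⁅φ x, φ y⁆ = c • φ x) :
    ⁅x, y⁆ = c • x :=
  Subtype.val_injective <| hφ <| by simpa [Ring.lie_def] using h

theorem IsLieNDeriv.smul_map_eq_commPolyLeibniz_cons_const {k : ℕ}
    (hL : IsLieNDeriv 𝒜 (k + 1) L) (hφ : Function.Injective φ) (h : ⁅φ x, φ y⁆ = c • φ x) :
    c ^ k • φ (L x) =
      commPolyLeibniz (k + 1) (Fin.cons (φ x) fun _ => φ y)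
        (Fin.cons (φ (L x)) fun _ => φ (L y)) := by
  have := hL.map_apply_commPoly φ (Fin.cons x fun _ => y)
  rwa [commPoly_cons_const (lie_eq_smul_of_map hφ h), map_smul, map_smul,
    Fin.cons_const_comp (fun z : 𝒜 => φ z), Fin.cons_const_comp (fun z : 𝒜 => φ (L z))] at this

theorem IsLieNDeriv.lie_commPolyLeibniz_cons_const_add_smul_lie_eq_zero {k : ℕ}
    (hL : IsLieNDeriv 𝒜 (k + 2) L) (hφ : Function.Injective φ) (h : ⁅φ x, φ y⁆ = c • φ x) :
    ⁅commPolyLeibniz (k + 1) (Fin.cons (φ x) fun _ => φ y)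
        (Fin.cons (φ (L x)) fun _ => φ (L y)), φ x⁆ + c ^ k • ⁅φ x, φ (L x)⁆ = 0 := by
  have := hL.map_apply_commPoly φ (Fin.snoc (Fin.cons x fun _ => y) x)
  rw [commPoly_snoc, commPoly_cons_const (lie_eq_smul_of_map hφ h), smul_lie, lie_self,
    smul_zero, map_zero, map_zero, Fin.snoc_cons_const_comp (fun z : 𝒜 => φ z),
    Fin.snoc_cons_const_comp (fun z : 𝒜 => φ (L z)), commPolyLeibniz_snoc,
    commPoly_cons_const h, smul_lie] at this
  exact this.symm

end LieNDeriv

section UpperTriangular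

attribute [local instance] LieRing.ofAssociativeRing

open Matrix

local notation "𝕄" => Matrix (Fin 2) (Fin 2) ℂ
local notation "e₀₀" => (single 0 0 1 : 𝕄)
local notation "e₀₁" => (single 0 1 1 : 𝕄)
local notation "e₁₁" => (single 1 1 1 : 𝕄)

variable (P Q R : 𝕄)

theorem lie_e₀₁_e₁₁ : ⁅e₀₁, e₁₁⁆ = (1 : ℂ) • e₀₁ := by
  ext i j; fin_cases i <;> fin_cases j <;> simp [Ring.lie_def]

theorem lie_e₀₁_e₀₀ : ⁅e₀₁, e₀₀⁆ = (-1 : ℂ) • e₀₁ := by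
  ext i j; fin_cases i <;> fin_cases j <;> simp [Ring.lie_def]

-- Written as a multiple of `e₀₀` so that `commPoly_cons_const` applies, with `c = 0`.
theorem lie_e₀₀_e₁₁ : ⁅e₀₀, e₁₁⁆ = (0 : ℂ) • e₀₀ := by
  ext i j; fin_cases i <;> fin_cases j <;> simp [Ring.lie_def]

theorem commPolyLeibniz_e₀₁_e₁₁_apply_one_zero (k : ℕ) :
    commPolyLeibniz (k + 1) (Fin.cons e₀₁ fun _ => e₁₁) (Fin.cons Q fun _ => R) 1 0 =
      (-1) ^ k * Q 1 0 := by
  induction k with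
  | zero => rw [commPolyLeibniz_one, Fin.cons_zero]; simp
  | succ k ih =>
    rw [commPolyLeibniz_cons_const_succ lie_e₀₁_e₁₁]
    simp [Ring.lie_def, mul_apply, ih, pow_succ]

theorem commPolyLeibniz_e₀₁_e₁₁ (k : ℕ) :
    commPolyLeibniz (k + 2) (Fin.cons e₀₁ fun _ => e₁₁) (Fin.cons Q fun _ => R) =
      !![R 1 0, Q 0 1 + (k + 1) * (R 1 1 - R 0 0); (-1) ^ (k + 1) * Q 1 0, -R 1 0] := by
  induction k with
  | zero =>
    rw [commPolyLeibniz_cons_const_succ lie_e₀₁_e₁₁, commPolyLeibniz_one, Fin.cons_zero]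
    ext i j; fin_cases i <;> fin_cases j <;> simp [Ring.lie_def, mul_apply, Fin.sum_univ_two]
  | succ k ih =>
    rw [commPolyLeibniz_cons_const_succ lie_e₀₁_e₁₁, ih]
    ext i j
    fin_cases i <;> fin_cases j <;>
      simp [Ring.lie_def, mul_apply, Fin.sum_univ_two, vecMul, vecHead, vecTail] <;> ring

theorem commPolyLeibniz_e₀₁_e₀₀ (k : ℕ) :
    commPolyLeibniz (k + 2) (Fin.cons e₀₁ fun _ => e₀₀) (Fin.cons Q fun _ => P) =
      !![(-1) ^ k * P 1 0, (-1) ^ (k + 1) * (Q 0 1 - (k + 1) * (P 1 1 - P 0 0));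
        Q 1 0, -((-1) ^ k * P 1 0)] := by
  induction k with
  | zero =>
    rw [commPolyLeibniz_cons_const_succ lie_e₀₁_e₀₀, commPolyLeibniz_one, Fin.cons_zero]
    ext i j
    fin_cases i <;> fin_cases j <;> simp [Ring.lie_def, mul_apply, Fin.sum_univ_two] <;> ring
  | succ k ih =>
    rw [commPolyLeibniz_cons_const_succ lie_e₀₁_e₀₀, ih]
    ext i j
    fin_cases i <;> fin_cases j <;>
      simp [Ring.lie_def, mul_apply, Fin.sum_univ_two, vecMul, vecHead, vecTail] <;> ring

theorem commPolyLeibniz_e₀₀_e₁₁ (k : ℕ) :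
    commPolyLeibniz (k + 2) (Fin.cons e₀₀ fun _ => e₁₁) (Fin.cons P fun _ => R) =
      !![0, P 0 1 + R 0 1; (-1) ^ (k + 1) * (P 1 0 + R 1 0), 0] := by
  induction k with
  | zero =>
    rw [commPolyLeibniz_cons_const_succ lie_e₀₀_e₁₁, commPolyLeibniz_one, Fin.cons_zero]
    ext i j
    fin_cases i <;> fin_cases j <;> simp [Ring.lie_def, mul_apply, Fin.sum_univ_two] <;> ring
  | succ k ih =>
    rw [commPolyLeibniz_cons_const_succ lie_e₀₀_e₁₁, ih]
    ext i j
    fin_cases i <;> fin_cases j <;>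
      simp [Ring.lie_def, mul_apply, Fin.sum_univ_two, vecMul, vecHead, vecTail] <;> ring

theorem sum_smul_sub_lie_eq_smul_one {m : ℕ}
    (h₁ : (1 : ℂ) ^ (m + 1) • Q =
      commPolyLeibniz (m + 2) (Fin.cons e₀₁ fun _ => e₁₁) (Fin.cons Q fun _ => R))
    (h₂ : (-1 : ℂ) ^ (m + 1) • Q =
      commPolyLeibniz (m + 2) (Fin.cons e₀₁ fun _ => e₀₀) (Fin.cons Q fun _ => P))
    (h₃ : ⁅commPolyLeibniz (m + 1) (Fin.cons e₀₁ fun _ => e₁₁) (Fin.cons Q fun _ => R), e₀₁⁆ +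
      (1 : ℂ) ^ m • ⁅e₀₁, Q⁆ = 0)
    (h₄ : (0 : ℂ) ^ (m + 1) • P =
      commPolyLeibniz (m + 2) (Fin.cons e₀₀ fun _ => e₁₁) (Fin.cons P fun _ => R))
    {W : 𝕄} (hW : W 1 0 = 0) :
    W 0 0 • P + W 0 1 • Q + W 1 1 • R - ⁅!![Q 0 1, -P 0 1; P 1 0, 0], W⁆ =
      (P 0 0 * W 0 0 + R 0 0 * W 1 1) • 1 := by
  rw [commPolyLeibniz_e₀₁_e₁₁] at h₁
  rw [commPolyLeibniz_e₀₁_e₀₀] at h₂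
  rw [commPolyLeibniz_e₀₀_e₁₁] at h₄
  have a₁ := congrFun₂ h₁ 1 1
  have a₂ := congrFun₂ h₁ 0 1
  have a₃ := congrFun₂ h₁ 1 0
  have b₁ := congrFun₂ h₂ 0 0
  have b₂ := congrFun₂ h₂ 0 1
  have c₁ := congrFun₂ h₃ 0 0
  have d₁ := congrFun₂ h₄ 0 1
  have d₂ := congrFun₂ h₄ 1 0
  simp [Ring.lie_def, mul_apply, commPolyLeibniz_e₀₁_e₁₁_apply_one_zero] at a₁ a₂ a₃ b₁ b₂ c₁ d₁ d₂
  have hR : R 1 1 = R 0 0 := sub_eq_zero.mp (a₂.resolve_left (Nat.cast_add_one_ne_zero m))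
  have hP : P 1 1 = P 0 0 := by
    have : ((m : ℂ) + 1) * (P 1 1 - P 0 0) = 0 := by linear_combination b₂
    exact sub_eq_zero.mp ((mul_eq_zero.mp this).resolve_left (Nat.cast_add_one_ne_zero m))
  -- `a₃` alone only kills `Q 1 0` for even `m`; the tuple ending in `e₀₁` supplies odd `m`.
  have hQ₁₀ : Q 1 0 = 0 := by linear_combination (a₃ + c₁) / 2
  have hQ₀₀ : Q 0 0 = -P 1 0 := by
    have hsq : ((-1 : ℂ) ^ m) ^ 2 = 1 := by rw [← pow_mul]; exact Even.neg_one_pow ⟨m, by ring⟩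
    linear_combination (-1 : ℂ) ^ (m + 1) * b₁ - (Q 0 0 + P 1 0) * hsq
  ext i j
  fin_cases i <;> fin_cases j <;>
    simp [Ring.lie_def, mul_apply, Fin.sum_univ_two, vecMul, vecHead, vecTail, hW]
  · linear_combination W 0 1 * hQ₀₀
  · linear_combination -W 1 1 * d₁
  · linear_combination W 0 1 * hQ₁₀ + W 1 1 * d₂
  · linear_combination W 0 0 * hP + W 0 1 * (a₁ - d₂) + W 1 1 * hR

theorem apply_self_commPoly_eq_zero {B : Type*} [Ring B] [Algebra ℂ B]
    (ψ : B ≃ₐ[ℂ] 𝕄) {𝒜 : Subalgebra ℂ B} (h𝒜 : ∀ T, T ∈ 𝒜 ↔ ψ T 1 0 = 0) {m : ℕ}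
    (a : Fin (m + 2) → 𝒜) (i : Fin 2) : ψ (commPoly (m + 2) a : 𝒜) i i = 0 := by
  have hU := (h𝒜 _).1 (commPoly (m + 1) fun i => a i.castSucc).2
  have hV := (h𝒜 _).1 (a (Fin.last (m + 1))).2
  fin_cases i <;> simp [commPoly, mul_apply, Fin.sum_univ_two, hU, hV] <;> ring

theorem IsLieNDeriv.exists_eq_lie_add_smul_one {B : Type*} [Ring B] [Algebra ℂ B]
    (ψ : B ≃ₐ[ℂ] 𝕄) {𝒜 : Subalgebra ℂ B} (h𝒜 : ∀ T, T ∈ 𝒜 ↔ ψ T 1 0 = 0) {m : ℕ}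
    {L : 𝒜 →ₗ[ℂ] B} (hL : IsLieNDeriv 𝒜 (m + 2) L) :
    ∃ (T : B) (c₀ c₁ : ℂ), ∀ w : 𝒜, L w = ⁅T, (w : B)⁆ + (c₀ * ψ w 0 0 + c₁ * ψ w 1 1) • 1 := by
  have hψ : Function.Injective (ψ : B →ₐ[ℂ] 𝕄) := ψ.injective
  have hsurj : ∀ U : 𝕄, U 1 0 = 0 → ∃ u : 𝒜, ψ u = U :=
    fun U hU => ⟨⟨ψ.symm U, (h𝒜 _).2 (by simpa using hU)⟩, by simp⟩
  obtain ⟨E₀₀, hE₀₀⟩ := hsurj e₀₀ (by simp)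
  obtain ⟨E₀₁, hE₀₁⟩ := hsurj e₀₁ (by simp)
  obtain ⟨E₁₁, hE₁₁⟩ := hsurj e₁₁ (by simp)
  have h₁ := hL.smul_map_eq_commPolyLeibniz_cons_const hψ (x := E₀₁) (y := E₁₁) (c := 1)
    (by simpa [hE₀₁, hE₁₁] using lie_e₀₁_e₁₁)
  have h₂ := hL.smul_map_eq_commPolyLeibniz_cons_const hψ (x := E₀₁) (y := E₀₀) (c := -1)
    (by simpa [hE₀₁, hE₀₀] using lie_e₀₁_e₀₀)
  have h₃ := hL.lie_commPolyLeibniz_cons_const_add_smul_lie_eq_zero hψ (x := E₀₁) (y := E₁₁)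
    (c := 1) (by simpa [hE₀₁, hE₁₁] using lie_e₀₁_e₁₁)
  have h₄ := hL.smul_map_eq_commPolyLeibniz_cons_const hψ (x := E₀₀) (y := E₁₁) (c := 0)
    (by simpa [hE₀₀, hE₁₁] using lie_e₀₀_e₁₁)
  simp only [AlgEquiv.coe_toAlgHom, hE₀₀, hE₀₁, hE₁₁] at h₁ h₂ h₃ h₄
  refine ⟨ψ.symm !![ψ (L E₀₁) 0 1, -ψ (L E₀₀) 0 1; ψ (L E₀₀) 1 0, 0], ψ (L E₀₀) 0 0,
    ψ (L E₁₁) 0 0, fun w => ψ.injective ?_⟩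
  have hw : w = ψ w 0 0 • E₀₀ + ψ w 0 1 • E₀₁ + ψ w 1 1 • E₁₁ := by
    apply Subtype.val_injective
    apply ψ.injective
    ext i j
    fin_cases i <;> fin_cases j <;> simp [hE₀₀, hE₀₁, hE₁₁, (h𝒜 w).1 w.2]
  have key := sum_smul_sub_lie_eq_smul_one _ _ _ h₁ h₂ h₃ h₄ ((h𝒜 w).1 w.2)
  conv_lhs => rw [hw]
  simp only [map_add, map_smul, Ring.lie_def, map_sub, map_mul, AlgEquiv.apply_symm_apply,
    map_one] at key ⊢
  rw [← key]
  abel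

end UpperTriangular

section AdaptedBasis

variable {K V : Type*} [Field K] [AddCommGroup V] [Module K V] {N : Submodule K V}

theorem exists_basis_fin_two_mem_notMem (h : Module.finrank K V = 2) (hbot : N ≠ ⊥)
    (htop : N ≠ ⊤) : ∃ b : Module.Basis (Fin 2) K V, b 0 ∈ N ∧ b 1 ∉ N := by
  obtain ⟨v₀, hv₀N, hv₀⟩ := Submodule.exists_mem_ne_zero_of_ne_bot hbot
  obtain ⟨v₁, hv₁⟩ := SetLike.exists_not_mem_of_ne_top N htop
  have hli : LinearIndependent K ![v₀, v₁] :=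
    LinearIndependent.pair_symm_iff.mp <| linearIndependent_fin2.mpr
      ⟨hv₀, fun a ha => hv₁ (by simp at ha; exact ha ▸ N.smul_mem a hv₀N)⟩
  refine ⟨basisOfLinearIndependentOfCardEqFinrank hli (by simp [h]), ?_⟩
  simpa using ⟨hv₀N, hv₁⟩

theorem Module.Basis.mem_iff_repr_one_eq_zero (b : Module.Basis (Fin 2) K V) (hb₀ : b 0 ∈ N)
    (hb₁ : b 1 ∉ N) {x : V} : x ∈ N ↔ b.repr x 1 = 0 := by
  have hx : b.repr x 0 • b 0 + b.repr x 1 • b 1 = x := by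
    simpa only [Fin.sum_univ_two] using b.sum_repr x
  constructor
  · intro hxN
    by_contra hc
    refine hb₁ ((N.smul_mem_iff hc).mp ?_)
    rw [eq_sub_of_add_eq' hx]
    exact N.sub_mem hxN (N.smul_mem _ hb₀)
  · intro h1
    rw [← hx, h1, zero_smul, add_zero]
    exact N.smul_mem _ hb₀

end AdaptedBasis

section InnerDerivation

attribute [local instance] LieRing.ofAssociativeRing

variable {B : Type*} [Ring B] [Algebra ℂ B] (𝒜 : Subalgebra ℂ B) (T : B)

def Subalgebra.innerDeriv : 𝒜 →ₗ[ℂ] B :=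
  (LinearMap.mulLeft ℂ T - LinearMap.mulRight ℂ T) ∘ₗ 𝒜.val.toLinearMap

theorem Subalgebra.innerDeriv_apply (w : 𝒜) : 𝒜.innerDeriv T w = ⁅T, (w : B)⁆ := rfl

theorem Subalgebra.isDerivOn_innerDeriv : IsDerivOn 𝒜 (𝒜.innerDeriv T) := by
  intro u v
  simp only [innerDeriv_apply, Ring.lie_def, Subalgebra.coe_mul]
  noncomm_ring

theorem Subalgebra.continuous_innerDeriv [TopologicalSpace B] [IsTopologicalRing B] :
    Continuous (𝒜.innerDeriv T) :=
  (continuous_const.mul continuous_subtype_val).sub (continuous_subtype_val.mul continuous_const)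

end InnerDerivation

section NestAlgebra

variable {X : Type*} [NormedAddCommGroup X] [NormedSpace ℂ X] {N : Submodule ℂ X}

theorem mem_nestAlgebra_bot_top_iff {T : X →L[ℂ] X} :
    T ∈ nestAlgebra {⊥, N, ⊤} ↔ ∀ x ∈ N, T x ∈ N := by
  refine ⟨fun hT => hT N (by simp), fun hT M hM x hx => ?_⟩
  rcases hM with rfl | rfl | rfl
  · rw [(Submodule.mem_bot ℂ).mp hx, map_zero]
    exact Submodule.zero_mem _
  · exact hT x hx
  · trivial

theorem mem_nestAlgebra_iff_toMatrixAlgEquiv_one_zero (b : Module.Basis (Fin 2) ℂ X)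
    (hb₀ : b 0 ∈ N) (hb₁ : b 1 ∉ N) (T : X →L[ℂ] X) :
    T ∈ nestAlgebra {⊥, N, ⊤} ↔ LinearMap.toMatrixAlgEquiv b (T : X →ₗ[ℂ] X) 1 0 = 0 := by
  rw [mem_nestAlgebra_bot_top_iff, LinearMap.toMatrixAlgEquiv_apply, ContinuousLinearMap.coe_coe,
    ← b.mem_iff_repr_one_eq_zero hb₀ hb₁]
  refine ⟨fun hT => hT _ hb₀, fun hT x hx => ?_⟩
  rw [b.mem_iff_repr_one_eq_zero hb₀ hb₁] at hx ⊢
  have hx' : b.repr x 0 • b 0 = x := by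
    simpa only [Fin.sum_univ_two, hx, zero_smul, add_zero] using b.sum_repr x
  rw [← hx', map_smul, map_smul, Finsupp.smul_apply,
    (b.mem_iff_repr_one_eq_zero hb₀ hb₁).mp hT, smul_zero]

end NestAlgebra

theorem statement7_general {X : Type*} [NormedAddCommGroup X] [NormedSpace ℂ X]
    (hdim : Module.rank ℂ X = 2)
    (𝒩 : Set (Submodule ℂ X))
    (N : Submodule ℂ X) (h𝒩 : 𝒩 = ({⊥, N, ⊤} : Set (Submodule ℂ X)))
    (hNbot : N ≠ ⊥) (hNtop : N ≠ ⊤)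
    (n : ℕ) (hn : 2 ≤ n)
    (L : ↥(nestAlgebra 𝒩) →ₗ[ℂ] (X →L[ℂ] X))
    (hL : IsLieNDeriv (nestAlgebra 𝒩) n L) :
    (∃ D H : ↥(nestAlgebra 𝒩) →ₗ[ℂ] (X →L[ℂ] X),
        IsDerivOn (nestAlgebra 𝒩) D ∧
        (∀ a : ↥(nestAlgebra 𝒩), ∃ c : ℂ, H a = c • (1 : X →L[ℂ] X)) ∧
        (∀ a : Fin n → ↥(nestAlgebra 𝒩), H (commPoly n a) = 0) ∧
        L = D + H) ∧
    (Continuous L →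
      ∃ D H : ↥(nestAlgebra 𝒩) →ₗ[ℂ] (X →L[ℂ] X),
        IsDerivOn (nestAlgebra 𝒩) D ∧
        (∀ a : ↥(nestAlgebra 𝒩), ∃ c : ℂ, H a = c • (1 : X →L[ℂ] X)) ∧
        (∀ a : Fin n → ↥(nestAlgebra 𝒩), H (commPoly n a) = 0) ∧
        L = D + H ∧ Continuous D ∧ Continuous H) := by
  subst h𝒩
  obtain ⟨m, rfl⟩ : ∃ m, n = m + 2 := ⟨n - 2, by omega⟩
  have hfin : Module.finrank ℂ X = 2 := Module.finrank_eq_of_rank_eq hdim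
  have : FiniteDimensional ℂ X := Module.finite_of_finrank_eq_succ hfin
  obtain ⟨b, hb₀, hb₁⟩ := exists_basis_fin_two_mem_notMem hfin hNbot hNtop
  let ψ := (Module.End.toContinuousLinearMap X).symm.trans (LinearMap.toMatrixAlgEquiv b)
  have h𝒜 : ∀ T, T ∈ nestAlgebra {⊥, N, ⊤} ↔ ψ T 1 0 = 0 :=
    mem_nestAlgebra_iff_toMatrixAlgEquiv_one_zero b hb₀ hb₁
  obtain ⟨T, c₀, c₁, hT⟩ := hL.exists_eq_lie_add_smul_one ψ h𝒜
  set D := (nestAlgebra {⊥, N, ⊤}).innerDeriv T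
  have hH : ∀ w, (L - D) w = (c₀ * ψ w 0 0 + c₁ * ψ w 1 1) • 1 := fun w => by
    rw [LinearMap.sub_apply, hT w, Subalgebra.innerDeriv_apply, add_sub_cancel_left]
  have hD := (nestAlgebra {⊥, N, ⊤}).isDerivOn_innerDeriv T
  have hscalar : ∀ w, ∃ c : ℂ, (L - D) w = c • 1 := fun w => ⟨_, hH w⟩
  have hvanish : ∀ a, (L - D) (commPoly (m + 2) a) = 0 := fun a => by
    rw [hH, apply_self_commPoly_eq_zero ψ h𝒜, apply_self_commPoly_eq_zero ψ h𝒜]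
    simp
  have hLDH : L = D + (L - D) := (add_sub_cancel D L).symm
  exact ⟨⟨D, L - D, hD, hscalar, hvanish, hLDH⟩, fun hLc => ⟨D, L - D, hD, hscalar, hvanish,
    hLDH, Subalgebra.continuous_innerDeriv _ T, hLc.sub (Subalgebra.continuous_innerDeriv _ T)⟩⟩

/-- Let `X` be a complex Banach space with `dim X = 2` and let
`𝒩 = {{0}, N, X}` be a non-trivial nest on `X`.  Then for every `n ≥ 2`, every Lie
`n`-derivation `L : Alg 𝒩 → B(X)` decomposes as `L = D + H` with `D` a derivation and
`H` a linear map into `ℂ I` vanishing on all `(n-1)`-th commutators; moreover, if `L`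
is continuous then `D, H` can be chosen continuous. -/
theorem statement7 {X : Type*} [NormedAddCommGroup X] [NormedSpace ℂ X] [CompleteSpace X]
    (hdim : Module.rank ℂ X = 2)
    (𝒩 : Set (Submodule ℂ X)) (hnest : IsNest 𝒩)
    (N : Submodule ℂ X) (h𝒩 : 𝒩 = ({⊥, N, ⊤} : Set (Submodule ℂ X)))
    (hNbot : N ≠ ⊥) (hNtop : N ≠ ⊤)
    (n : ℕ) (hn : 2 ≤ n)
    (L : ↥(nestAlgebra 𝒩) →ₗ[ℂ] (X →L[ℂ] X))
    (hL : IsLieNDeriv (nestAlgebra 𝒩) n L) :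
    (∃ D H : ↥(nestAlgebra 𝒩) →ₗ[ℂ] (X →L[ℂ] X),
        IsDerivOn (nestAlgebra 𝒩) D ∧
        (∀ a : ↥(nestAlgebra 𝒩), ∃ c : ℂ, H a = c • (1 : X →L[ℂ] X)) ∧
        (∀ a : Fin n → ↥(nestAlgebra 𝒩), H (commPoly n a) = 0) ∧
        L = D + H) ∧
    (Continuous L →
      ∃ D H : ↥(nestAlgebra 𝒩) →ₗ[ℂ] (X →L[ℂ] X),
        IsDerivOn (nestAlgebra 𝒩) D ∧
        (∀ a : ↥(nestAlgebra 𝒩), ∃ c : ℂ, H a = c • (1 : X →L[ℂ] X)) ∧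
        (∀ a : Fin n → ↥(nestAlgebra 𝒩), H (commPoly n a) = 0) ∧
        L = D + H ∧ Continuous D ∧ Continuous H) :=
  statement7_general hdim 𝒩 N h𝒩 hNbot hNtop n hn L hL
end
end

section
/- Let X be a complex Banach space with dim X > 2, let 𝒩 be a non-trivial nest on X with dim X_-^⊥ > 1, let 𝒜 be a subalgebra of Alg 𝒩 satisfying (♠1)–(♠5), let n ≥ 2, and let L : 𝒜 → B(X) be a Lie n-derivation. Then for every x ∈ X, every f ∈ X_-^⊥(𝒜)∖{0}, and every y ∈ X with f(y) = 1, there exists φ ∈ X* with φ(y) = 0 such that L(x⊗f) = ((L(x⊗f) − h(x,f)I)y) ⊗ f + x ⊗ φ + h(x,f)I. -/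
open scoped Classical

set_option synthInstance.maxHeartbeats 1000000
set_option maxHeartbeats 1000000

noncomputable section

/-- `L` is a Lie `n`-derivation from the (not necessarily unital) subalgebra `𝒜` of
`B(X)` into `B(X)`. -/
def IsLieNDerivNU {X : Type*} [NormedAddCommGroup X] [NormedSpace ℂ X]
    (𝒜 : NonUnitalSubalgebra ℂ (X →L[ℂ] X)) (n : ℕ)
    (L : ↥𝒜 →ₗ[ℂ] (X →L[ℂ] X)) : Prop :=
  ∀ a : Fin n → ↥𝒜,
    L (commPoly n a) =
      ∑ k : Fin n,
        commPoly n (Function.update (fun i => ((a i : X →L[ℂ] X))) k (L (a k)))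

/-- The scalar `h(x, f)` attached to a Lie-type derivation `L`: it is `0` when
`f(x) = 0`, and `f(L(x ⊗ f) x) / f(x)` otherwise. -/
def hAux {X : Type*} [NormedAddCommGroup X] [NormedSpace ℂ X]
    (𝒜 : NonUnitalSubalgebra ℂ (X →L[ℂ] X)) (L : ↥𝒜 →ₗ[ℂ] (X →L[ℂ] X))
    (x : X) (f : X →L[ℂ] ℂ) : ℂ :=
  if f x = 0 then 0
  else if hm : f.smulRight x ∈ 𝒜 then f ((L ⟨f.smulRight x, hm⟩) x) / f x
  else 0


/-! Write `P = y ⊗ f` with `f y = 1` and `T u = L (u ⊗ f)`; by (♠3) and (♠5) every `u ⊗ f` lies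
in `𝒜`, so `T` is linear. For `f u = 0` we have `[u ⊗ f, P] = u ⊗ f`, so the tuple
`(u ⊗ f, P, …, P)` has `p_n = u ⊗ f` and the Lie `n`-derivation identity reads
`T u = ad_P^{n-1} (T u) + ∑_{j < n-1} ad_P^j [u ⊗ f, T y]`, where `ad_P S = [S, P]`.
Evaluating at `z ∈ ker f`, for `y` and for `y + w` with `w ∈ ker f` independent of `u` (this is
where `dim X > 2` enters), gives `T u z = f (T y z) u`; evaluating at `y` gives
`T y u = f (T y y) u + f (T y u) y` and `f (T u y) = -f (T y u)`. Splitting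
`x = f x • y + (x - f x • y)` then yields the stated form of `L (x ⊗ f)`, with
`h(x, f) = f x * f (T y y)`. -/

section CommPoly

variable {R : Type*} [Ring R]

theorem commPoly_add_succ_eq_iterate (e : R) (k : ℕ) :
    ∀ (j : ℕ) (a : Fin (k + j + 1) → R), (∀ i : Fin (k + j + 1), k < (i : ℕ) → a i = e) →
      commPoly (k + j + 1) a =
        (fun S => ⁅S, e⁆)^[j] (commPoly (k + 1) fun i => a (Fin.castLE (by omega) i))
  | 0, a, _ => rfl
  | j + 1, a, h => by
    change ⁅commPoly (k + j + 1) (Fin.init a), a (Fin.last _)⁆ = _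
    rw [h _ (by simp), Function.iterate_succ_apply',
      commPoly_add_succ_eq_iterate e k j (Fin.init a) fun i hi => h _ (by simpa using hi)]
    rfl

theorem commPoly_eq_iterate_of_forall {n k : ℕ} (hk : k < n) (e : R) (a : Fin n → R)
    (h : ∀ i : Fin n, k < (i : ℕ) → a i = e) :
    commPoly n a =
      (fun S => ⁅S, e⁆)^[n - (k + 1)] (commPoly (k + 1) fun i => a (Fin.castLE hk i)) := by
  obtain ⟨j, rfl⟩ : ∃ j, n = k + j + 1 := ⟨n - (k + 1), by omega⟩
  rw [show k + j + 1 - (k + 1) = j by omega]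
  exact commPoly_add_succ_eq_iterate e k j a h

theorem commPoly_eq_iterate_of_head {m : ℕ} (V P : R) (a : Fin (m + 1) → R) (h0 : a 0 = V)
    (hP : ∀ i : Fin (m + 1), i ≠ 0 → a i = P) :
    commPoly (m + 1) a = (fun S => ⁅S, P⁆)^[m] V := by
  rw [commPoly_eq_iterate_of_forall (Nat.succ_pos m) P a fun i hi => hP i ?_, ← h0]
  · rfl
  · exact Fin.pos_iff_ne_zero.mp hi

theorem commPoly_eq_iterate_of_head_of_lie_eq {U P V : R} (hU : ⁅U, P⁆ = U) {m k : ℕ}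
    (hk : k < m) (a : Fin (m + 1) → R) (h0 : a 0 = U) (hV : a ⟨k + 1, by omega⟩ = V)
    (hP : ∀ i : Fin (m + 1), i ≠ 0 → (i : ℕ) ≠ k + 1 → a i = P) :
    commPoly (m + 1) a = (fun S => ⁅S, P⁆)^[m - (k + 1)] ⁅U, V⁆ := by
  have hk' : k + 1 < m + 1 := by omega
  rw [commPoly_eq_iterate_of_forall hk' P a fun i hi => hP i ?_ ?_,
    show m + 1 - (k + 1 + 1) = m - (k + 1) by omega]
  · change (fun S => ⁅S, P⁆)^[_] ⁅commPoly (k + 1) (A := R) _, _⁆ = _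
    rw [commPoly_eq_iterate_of_head U P (fun i => a (Fin.castLE hk' i.castSucc)) h0
      fun i hi => hP _ ?_ ?_, Function.iterate_fixed hU k]
    · exact congrArg _ (congrArg _ hV)
    · rw [Ne, Fin.ext_iff] at hi ⊢
      simpa using hi
    · have := i.isLt
      simp only [Fin.val_castLE, Fin.val_castSucc]
      omega
  · rintro rfl
    simp at hi
  · omega

end CommPoly

section RankOne

variable {X : Type*} [NormedAddCommGroup X] [NormedSpace ℂ X] (f : X →L[ℂ] ℂ) {y : X}

theorem smulRight_mul_smulRight (g : X →L[ℂ] ℂ) (u v : X) :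
    f.smulRight u * g.smulRight v = g.smulRight (f v • u) :=
  ContinuousLinearMap.smulRight_comp_smulRight f g

theorem lie_smulRight_smulRight_of_ker (hy : f y = 1) {u : X} (hu : f u = 0) :
    ⁅f.smulRight u, f.smulRight y⁆ = f.smulRight u := by
  rw [Ring.lie_def, smulRight_mul_smulRight, smulRight_mul_smulRight, hy, hu, one_smul,
    zero_smul, ContinuousLinearMap.smulRight_zero, sub_zero]

theorem lie_smulRight_apply (S : X →L[ℂ] X) (w : X) :
    ⁅S, f.smulRight y⁆ w = f w • S y - f (S w) • y := by
  simp [Ring.lie_def]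

theorem iterate_lie_smulRight_apply_of_ker (hy : f y = 1) {z : X} (hz : f z = 0) (j : ℕ)
    (S : X →L[ℂ] X) :
    (fun S => ⁅S, f.smulRight y⁆)^[j + 1] S z = ((-1) ^ (j + 1) * f (S z)) • y := by
  induction j with
  | zero => simp [lie_smulRight_apply, hz]
  | succ j ih =>
    rw [Function.iterate_succ_apply', lie_smulRight_apply, ih]
    simp [hz, hy, pow_succ, mul_smul]

theorem iterate_lie_smulRight_apply_self (hy : f y = 1) (j : ℕ) (S : X →L[ℂ] X) :
    (fun S => ⁅S, f.smulRight y⁆)^[j + 1] S y = S y - f (S y) • y := by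
  induction j with
  | zero => simp [lie_smulRight_apply, hy]
  | succ j ih =>
    rw [Function.iterate_succ_apply', lie_smulRight_apply, ih]
    simp [hy]

end RankOne

section LieDerivation

variable {X : Type*} [NormedAddCommGroup X] [NormedSpace ℂ X]

def rankOneMap (𝒜 : NonUnitalSubalgebra ℂ (X →L[ℂ] X)) (f : X →L[ℂ] ℂ)
    (hA : ∀ u, f.smulRight u ∈ 𝒜) : X →ₗ[ℂ] 𝒜 where
  toFun u := ⟨f.smulRight u, hA u⟩
  map_add' u v := Subtype.ext ((ContinuousLinearMap.smulRightₗ (T := ℂ) f).map_add u v)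
  map_smul' c u := Subtype.ext ((ContinuousLinearMap.smulRightₗ f).map_smul c u)

@[simp]
theorem coe_rankOneMap_apply (𝒜 : NonUnitalSubalgebra ℂ (X →L[ℂ] X)) (f : X →L[ℂ] ℂ)
    (hA : ∀ u, f.smulRight u ∈ 𝒜) (u : X) : (rankOneMap 𝒜 f hA u : X →L[ℂ] X) = f.smulRight u :=
  rfl

theorem commPoly_coe (𝒜 : NonUnitalSubalgebra ℂ (X →L[ℂ] X)) :
    ∀ (n : ℕ) (a : Fin n → 𝒜),
      ((commPoly n a : 𝒜) : X →L[ℂ] X) = commPoly n fun i => (a i : X →L[ℂ] X)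
  | 0, _ => rfl
  | 1, _ => rfl
  | n + 2, a => by
    change ((commPoly (n + 1) _ * _ - _ * commPoly (n + 1) _ : 𝒜) : X →L[ℂ] X) = _
    push_cast [commPoly_coe 𝒜 (n + 1)]
    rfl

def LieNRankOneIdentity (f : X →L[ℂ] ℂ) (m : ℕ) (T : X →ₗ[ℂ] (X →L[ℂ] X)) : Prop :=
  ∀ y, f y = 1 → ∀ u, f u = 0 →
    T u = (fun S => ⁅S, f.smulRight y⁆)^[m + 1] (T u) +
      ∑ j ∈ Finset.range (m + 1), (fun S => ⁅S, f.smulRight y⁆)^[j] ⁅f.smulRight u, T y⁆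

theorem IsLieNDerivNU.lieNRankOneIdentity {𝒜 : NonUnitalSubalgebra ℂ (X →L[ℂ] X)} {m : ℕ}
    {L : 𝒜 →ₗ[ℂ] (X →L[ℂ] X)} (hL : IsLieNDerivNU 𝒜 (m + 2) L) {f : X →L[ℂ] ℂ}
    (hA : ∀ u, f.smulRight u ∈ 𝒜) : LieNRankOneIdentity f m (L ∘ₗ rankOneMap 𝒜 f hA) := by
  intro y hy u hu
  set a : Fin (m + 2) → 𝒜 := fun i => if i = 0 then rankOneMap 𝒜 f hA u else rankOneMap 𝒜 f hA y
  have hlie := lie_smulRight_smulRight_of_ker f hy hu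
  have ha : commPoly (m + 2) a = rankOneMap 𝒜 f hA u := by
    refine Subtype.ext ?_
    rw [commPoly_coe, commPoly_eq_iterate_of_head (f.smulRight u) (f.smulRight y) _ (by simp [a])
      fun i hi => by simp [a, hi], Function.iterate_fixed hlie]
    rfl
  have hcoe : ∀ i, i ≠ 0 → ((a i : 𝒜) : X →L[ℂ] X) = f.smulRight y := fun i hi => by simp [a, hi]
  have hhead : commPoly (m + 2) (Function.update (fun i => (a i : X →L[ℂ] X)) 0 (L (a 0))) =
      (fun S => ⁅S, f.smulRight y⁆)^[m + 1] (L (rankOneMap 𝒜 f hA u)) :=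
    commPoly_eq_iterate_of_head _ _ _ (by simp [a]) fun i hi => by
      rw [Function.update_of_ne hi, hcoe i hi]
  have htail : ∀ k : Fin (m + 1),
      commPoly (m + 2) (Function.update (fun i => (a i : X →L[ℂ] X)) k.succ (L (a k.succ))) =
        (fun S => ⁅S, f.smulRight y⁆)^[m - k] ⁅f.smulRight u, L (rankOneMap 𝒜 f hA y)⁆ := by
    intro k
    rw [show m - k = m + 1 - (k + 1) by omega]
    refine commPoly_eq_iterate_of_head_of_lie_eq hlie k.isLt _ ?_ ?_ fun i hi hik => ?_
    · rw [Function.update_of_ne (Fin.succ_ne_zero k).symm]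
      simp [a]
    · rw [show (⟨k + 1, _⟩ : Fin (m + 2)) = k.succ from rfl, Function.update_self]
      simp [a]
    · rw [Function.update_of_ne fun h => hik (by simp [h]), hcoe i hi]
  have key := hL a
  rw [ha, Fin.sum_univ_succ, hhead, Finset.sum_congr rfl fun k _ => htail k] at key
  simp only [LinearMap.comp_apply]
  conv_lhs => rw [key]
  rw [Fin.sum_univ_eq_sum_range (fun k =>
    (fun S => ⁅S, f.smulRight y⁆)^[m - k] ⁅f.smulRight u, L (rankOneMap 𝒜 f hA y)⁆)]
  exact congrArg _ (Finset.sum_range_reflect (fun j =>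
    (fun S => ⁅S, f.smulRight y⁆)^[j] ⁅f.smulRight u, L (rankOneMap 𝒜 f hA y)⁆) (m + 1))

end LieDerivation

theorem exists_mem_ker_notMem_span_singleton {K V : Type*} [Field K] [AddCommGroup V]
    [Module K V] (hdim : 2 < Module.rank K V) (f : V →ₗ[K] K) {y : V} (hy : f y = 1) (u : V) :
    ∃ w, f w = 0 ∧ w ∉ Submodule.span K {u} := by
  by_contra! h
  have htop : (⊤ : Submodule K V) ≤ Submodule.span K {y, u} := fun w _ => by
    rw [← sub_add_cancel w (f w • y)]
    exact add_mem (Submodule.span_mono (by simp) (h _ (by simp [hy])))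
      (Submodule.smul_mem _ _ (Submodule.subset_span (by simp)))
  have : Module.rank K V ≤ 2 := calc
    Module.rank K V = Module.rank K (⊤ : Submodule K V) := (rank_top K V).symm
    _ ≤ Module.rank K (Submodule.span K {y, u}) := Submodule.rank_mono htop
    _ ≤ Cardinal.mk ({y, u} : Set V) := rank_span_le _
    _ ≤ Cardinal.mk ({u} : Set V) + 1 := Cardinal.mk_insert_le
    _ = 2 := by rw [Cardinal.mk_singleton, one_add_one_eq_two]
  exact hdim.not_ge this

namespace LieNRankOneIdentity

variable {X : Type*} [NormedAddCommGroup X] [NormedSpace ℂ X] {f : X →L[ℂ] ℂ} {m : ℕ}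
  {T : X →ₗ[ℂ] (X →L[ℂ] X)} {y : X}

theorem apply_of_ker (hT : LieNRankOneIdentity f m T) (hy : f y = 1) {u z : X} (hu : f u = 0)
    (hz : f z = 0) : T u z = ((-1) ^ (m + 1) * f (T u z)) • y + f (T y z) • u := by
  have h := congrArg (· z) (hT y hy u hu)
  have hS : ⁅f.smulRight u, T y⁆ z = f (T y z) • u := by simp [Ring.lie_def, hz]
  simp only [add_apply, FunLike.coe_sum, Finset.sum_apply,
    Finset.sum_range_succ', iterate_lie_smulRight_apply_of_ker f hy hz, hS, Function.iterate_zero,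
    id, map_smul, hu] at h
  simpa using h

theorem apply_self_of_ker (hT : LieNRankOneIdentity f m T) (hy : f y = 1) {u : X}
    (hu : f u = 0) : f (T u y) = -f (T y u) ∧ T y u = f (T y y) • u + f (T y u) • y := by
  have h := congrArg (· y) (hT y hy u hu)
  have hS : ⁅f.smulRight u, T y⁆ y = f (T y y) • u - T y u := by simp [Ring.lie_def, hy]
  simp only [add_apply, FunLike.coe_sum, Finset.sum_apply, Finset.sum_range_succ',
    iterate_lie_smulRight_apply_self f hy, hS, Function.iterate_zero, id, Finset.sum_const,
    Finset.card_range] at h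
  have hf := congrArg f h
  simp only [map_add, map_sub, map_smul, map_nsmul, hy, hu, smul_eq_mul] at hf
  have hdual : f (T u y) = -f (T y u) := by linear_combination hf
  refine ⟨hdual, ?_⟩
  have hv : ((m : ℂ) + 1) • (T y u - (f (T y y) • u + f (T y u) • y)) = 0 := by
    rw [hdual, ← Nat.cast_smul_eq_nsmul ℂ] at h
    simp only [map_sub, map_smul, hu, smul_zero, zero_sub] at h
    linear_combination (norm := module) h
  rw [smul_eq_zero, sub_eq_zero] at hv
  exact hv.resolve_left (Nat.cast_add_one_ne_zero m)

theorem dual_apply_of_ker (hT : LieNRankOneIdentity f m T) (hdim : 2 < Module.rank ℂ X)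
    (hy : f y = 1) {u z : X} (hu : f u = 0) (hz : f z = 0) : f (T u z) = 0 := by
  obtain ⟨w, hw, hwu⟩ := exists_mem_ker_notMem_span_singleton hdim (f : X →ₗ[ℂ] ℂ) hy u
  rw [ContinuousLinearMap.coe_coe] at hw
  have hyw : f (y + w) = 1 := by simp [hy, hw]
  have e1 := hT.apply_of_ker hy hu hz
  have e2 := hT.apply_of_ker hyw hu hz
  rw [map_add, add_apply, map_add] at e2
  have hlin : ((-1) ^ (m + 1) * f (T u z)) • w = -f (T w z) • u := by
    linear_combination (norm := module) e1 - e2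
  by_contra hne
  refine hwu (Submodule.mem_span_singleton.mpr ⟨((-1) ^ (m + 1) * f (T u z))⁻¹ * -f (T w z), ?_⟩)
  rw [mul_smul, ← hlin, inv_smul_smul₀ (mul_ne_zero (by simp) hne)]

theorem apply_of_ker_of_ker (hT : LieNRankOneIdentity f m T) (hdim : 2 < Module.rank ℂ X)
    (hy : f y = 1) {u z : X} (hu : f u = 0) (hz : f z = 0) : T u z = f (T y z) • u := by
  simpa [hT.dual_apply_of_ker hdim hy hu hz] using hT.apply_of_ker hy hu hz

theorem apply_eq_of_ker (hT : LieNRankOneIdentity f m T) (hdim : 2 < Module.rank ℂ X)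
    (hy : f y = 1) (x : X) {z : X} (hz : f z = 0) :
    T x z = (f x * f (T y y)) • z + f (T y z) • x := by
  have hx : f (x - f x • y) = 0 := by simp [hy]
  have hsplit : T x z = f x • T y z + T (x - f x • y) z := by
    rw [← smul_apply, ← add_apply, ← map_smul, ← map_add, add_sub_cancel]
  rw [hsplit, hT.apply_of_ker_of_ker hdim hy hx hz]
  linear_combination (norm := module) f x • (hT.apply_self_of_ker hy hz).2

theorem dual_apply_self (hT : LieNRankOneIdentity f m T) (hdim : 2 < Module.rank ℂ X)
    (hy : f y = 1) (x : X) : f (T x x) = f x * f x * f (T y y) := by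
  have hx : f (x - f x • y) = 0 := by simp [hy]
  have hxx : T x x = f x • T x y + T x (x - f x • y) := by
    rw [← map_smul, ← map_add, add_sub_cancel]
  have hxy : T x y = f x • T y y + T (x - f x • y) y := by
    rw [← smul_apply, ← add_apply, ← map_smul, ← map_add, add_sub_cancel]
  rw [hxx, hxy, hT.apply_eq_of_ker hdim hy x hx]
  simp only [map_add, map_smul, smul_eq_mul, hx, (hT.apply_self_of_ker hy hx).1]
  ring

theorem eq_smulRight_add (hT : LieNRankOneIdentity f m T) (hdim : 2 < Module.rank ℂ X)
    (hy : f y = 1) (x : X) :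
    T x = f.smulRight (T x y - (f x * f (T y y)) • y) +
      (f.comp (T y) - f (T y y) • f).smulRight x + (f x * f (T y y)) • 1 := by
  ext z
  have hz : f (z - f z • y) = 0 := by simp [hy]
  have hzz : T x z = f z • T x y + T x (z - f z • y) := by
    rw [← map_smul, ← map_add, add_sub_cancel]
  rw [hzz, hT.apply_eq_of_ker hdim hy x hz]
  simp only [add_apply, ContinuousLinearMap.smulRight_apply, sub_apply, smul_apply,
    ContinuousLinearMap.coe_comp, Function.comp_apply, map_sub, map_smul, smul_eq_mul,
    one_apply_eq_self]
  module

end LieNRankOneIdentity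

theorem hAux_eq_of_apply_self {X : Type*} [NormedAddCommGroup X] [NormedSpace ℂ X]
    {𝒜 : NonUnitalSubalgebra ℂ (X →L[ℂ] X)} {L : 𝒜 →ₗ[ℂ] (X →L[ℂ] X)} {x : X}
    {f : X →L[ℂ] ℂ} (hm : f.smulRight x ∈ 𝒜) {c : ℂ}
    (hx : f (L ⟨f.smulRight x, hm⟩ x) = f x * f x * c) : hAux 𝒜 L x f = f x * c := by
  by_cases hfx : f x = 0
  · simp [hAux, hfx]
  · rw [hAux, if_neg hfx, dif_pos hm, hx]
    field_simp

theorem statement9_general {X : Type*} [NormedAddCommGroup X] [NormedSpace ℂ X]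
    (hdim : 2 < Module.rank ℂ X)
    (𝒩 : Set (Submodule ℂ X))
    (𝒜 : NonUnitalSubalgebra ℂ (X →L[ℂ] X))
    -- (♠3) : `x ⊗ f ∈ 𝒜` for every `x ∈ X(𝒜)` and `f ∈ X₋^⊥(𝒜)`
    (hS3 : ∀ x ∈ XofA 𝒜, ∀ f ∈ XannA 𝒩 𝒜, f.smulRight x ∈ 𝒜)
    -- (♠5) : `X(𝒜) = X`
    (hS5 : XofA 𝒜 = Set.univ)
    (n : ℕ) (hn : 2 ≤ n)
    (L : ↥𝒜 →ₗ[ℂ] (X →L[ℂ] X)) (hL : IsLieNDerivNU 𝒜 n L) :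
    ∀ x : X, ∀ f ∈ XannA 𝒩 𝒜, f ≠ 0 → ∀ y : X, f y = 1 →
      ∀ (hm : f.smulRight x ∈ 𝒜),
      ∃ φ : X →L[ℂ] ℂ, φ y = 0 ∧
        L ⟨f.smulRight x, hm⟩ =
          f.smulRight ((L ⟨f.smulRight x, hm⟩) y - hAux 𝒜 L x f • y) +
            φ.smulRight x + hAux 𝒜 L x f • (1 : X →L[ℂ] X) := by
  intro x f hf _ y hy hm
  obtain ⟨m, rfl⟩ : ∃ m, n = m + 2 := ⟨n - 2, by omega⟩
  have hA : ∀ u, f.smulRight u ∈ 𝒜 := fun u => hS3 u (hS5 ▸ Set.mem_univ u) f hf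
  have hT := hL.lieNRankOneIdentity hA
  refine ⟨f.comp (L (rankOneMap 𝒜 f hA y)) - f (L (rankOneMap 𝒜 f hA y) y) • f, by simp [hy], ?_⟩
  rw [hAux_eq_of_apply_self hm (hT.dual_apply_self hdim hy x)]
  exact hT.eq_smulRight_add hdim hy x

/-- (Lemma 3.7 of the paper.)  For every `x ∈ X`, every nonzero
`f ∈ X₋^⊥(𝒜)`, and every `y` with `f(y) = 1`, there is `φ ∈ X*` with `φ(y) = 0` such
that `L(x ⊗ f) = ((L(x ⊗ f) - h(x,f) I) y) ⊗ f + x ⊗ φ + h(x,f) I`. -/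
theorem statement9 {X : Type*} [NormedAddCommGroup X] [NormedSpace ℂ X] [CompleteSpace X]
    (hdim : 2 < Module.rank ℂ X)
    (𝒩 : Set (Submodule ℂ X)) (hnest : IsNest 𝒩)
    (hnontrivial : 𝒩 ≠ ({⊥, ⊤} : Set (Submodule ℂ X)))
    (hdimann : 1 < Module.rank ℂ ↥(annihilatorOf (nestXminus 𝒩)))
    (𝒜 : NonUnitalSubalgebra ℂ (X →L[ℂ] X))
    (h𝒜 : ∀ T ∈ 𝒜, T ∈ nestAlgebra 𝒩)
    -- (♠1) : `X₋^⊥(𝒜) ≠ {0}` and `X₋^⊥(𝒜)` is a linear subspace of `X*`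
    (hS1 : XannA 𝒩 𝒜 ≠ ({0} : Set (X →L[ℂ] ℂ)) ∧
      ∃ p : Submodule ℂ (X →L[ℂ] ℂ), (p : Set (X →L[ℂ] ℂ)) = XannA 𝒩 𝒜)
    -- (♠2) : for each `f ∈ X₋^⊥(𝒜)` there exists `y ∈ X \ X₋` with `y ⊗ f ∈ 𝒜`
    (hS2 : ∀ f ∈ XannA 𝒩 𝒜, ∃ y : X, y ∉ nestXminus 𝒩 ∧ f.smulRight y ∈ 𝒜)
    -- (♠3) : `x ⊗ f ∈ 𝒜` for every `x ∈ X(𝒜)` and `f ∈ X₋^⊥(𝒜)`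
    (hS3 : ∀ x ∈ XofA 𝒜, ∀ f ∈ XannA 𝒩 𝒜, f.smulRight x ∈ 𝒜)
    -- (♠4) : `dim(X(𝒜) ∩ ker fᵢ) > 1` and `X(𝒜) ∩ ker f₁ ∩ ker f₂ ≠ {0}`
    (hS4 : ∀ f₁ ∈ XannA 𝒩 𝒜, ∀ f₂ ∈ XannA 𝒩 𝒜,
      (∃ u v : X, u ∈ XofA 𝒜 ∧ f₁ u = 0 ∧ v ∈ XofA 𝒜 ∧ f₁ v = 0 ∧
        LinearIndependent ℂ ![u, v]) ∧
      (∃ u v : X, u ∈ XofA 𝒜 ∧ f₂ u = 0 ∧ v ∈ XofA 𝒜 ∧ f₂ v = 0 ∧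
        LinearIndependent ℂ ![u, v]) ∧
      (∃ z : X, z ≠ 0 ∧ z ∈ XofA 𝒜 ∧ f₁ z = 0 ∧ f₂ z = 0))
    -- (♠5) : `X(𝒜) = X`
    (hS5 : XofA 𝒜 = Set.univ)
    (n : ℕ) (hn : 2 ≤ n)
    (L : ↥𝒜 →ₗ[ℂ] (X →L[ℂ] X)) (hL : IsLieNDerivNU 𝒜 n L) :
    ∀ x : X, ∀ f ∈ XannA 𝒩 𝒜, f ≠ 0 → ∀ y : X, f y = 1 →
      ∀ (hm : f.smulRight x ∈ 𝒜),
      ∃ φ : X →L[ℂ] ℂ, φ y = 0 ∧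
        L ⟨f.smulRight x, hm⟩ =
          f.smulRight ((L ⟨f.smulRight x, hm⟩) y - hAux 𝒜 L x f • y) +
            φ.smulRight x + hAux 𝒜 L x f • (1 : X →L[ℂ] X) :=
  statement9_general hdim 𝒩 𝒜 hS3 hS5 n hn L hL
end
end

section
/- Let X be a complex Banach space with dim X > 2, let 𝒩 be a non-trivial nest on X with dim X_-^⊥ > 1, let 𝒜 be a subalgebra of Alg 𝒩 satisfying (♠1)–(♠5), let n ≥ 2, and let L : 𝒜 → B(X) be a Lie n-derivation. Then for every f ∈ X_-^⊥(𝒜)∖{0}, all nonzero x_1, x_2 ∈ X, every z ∈ X ∩ ker f, and all scalars c_1, c_2 ∈ ℂ satisfying (L(x_i⊗f) − h(x_i,f)I)z = c_i x_i for i = 1, 2, one has c_1 = c_2. -/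
open scoped Classical

set_option synthInstance.maxHeartbeats 1000000
set_option maxHeartbeats 1000000

noncomputable section

/-!
Fix `f` and `z ∈ ker f` and put `ψ y = L(y ⊗ f) z`. For `u ∈ ker f` we have
`(u ⊗ f)(x ⊗ f) = f(x) (u ⊗ f)` and `(x ⊗ f)(u ⊗ f) = 0`, so `p_n(u ⊗ f, x ⊗ f, …, x ⊗ f)`
is `f(x)^(n-1) (u ⊗ f)`; applying `L` and evaluating at `z`, only the first and the last
summand survive, and for `f x = 1` this reads `ψ u = ± f(ψ u) x + f(ψ x) u`.
Comparing it for `x` and `x + w`, with `w ∈ ker f` not a multiple of `u` (possible since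
`dim X > 2`), forces `f(ψ u) = 0`. Hence `ψ u = μ u` on `ker f` and, by linearity,
`f(ψ x) = μ f(x)` everywhere, which pins `c` down to `μ` whether `f x` vanishes or not.
-/

section CommPoly

theorem map_commPoly_s10 {R S F : Type*} [NonUnitalNonAssocRing R] [NonUnitalNonAssocRing S]
    [FunLike F R S] [NonUnitalRingHomClass F R S] (φ : F) :
    ∀ (n : ℕ) (a : Fin n → R), φ (commPoly n a) = commPoly n (φ ∘ a)
  | 0, _ => map_zero φ
  | 1, _ => rfl
  | n + 2, a => by
    simp only [commPoly, map_sub, map_mul, map_commPoly_s10 φ (n + 1)]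
    rfl

variable {R : Type*} [Ring R]

theorem commPoly_succ_succ (n : ℕ) (a : Fin (n + 2) → R) :
    commPoly (n + 2) a = ⁅commPoly (n + 1) (fun i => a i.castSucc), a (Fin.last (n + 1))⁆ :=
  (Ring.lie_def _ _).symm

theorem commPoly_eq_iterate_lie_of_le (b : R) :
    ∀ (m k : ℕ) (hk : k ≤ m) (g : Fin (m + 1) → R), (∀ i : Fin (m + 1), k < i → g i = b) →
      commPoly (m + 1) g =
        (⁅·, b⁆)^[m - k] (commPoly (k + 1) fun i => g (Fin.castLE (by omega) i))
  | m, k, hk, g, hg => by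
    obtain rfl | hlt := hk.eq_or_lt
    · simp
    obtain ⟨m, rfl⟩ : ∃ m', m = m' + 1 := ⟨m - 1, by omega⟩
    rw [commPoly_succ_succ, commPoly_eq_iterate_lie_of_le b m k (by omega) _
        (fun i hi => hg _ (by simpa using hi)), hg _ (by simpa using hlt),
      show m + 1 - k = m - k + 1 by omega, Function.iterate_succ_apply']
    rfl

theorem commPoly_eq_iterate_lie (b : R) (m : ℕ) (g : Fin (m + 1) → R)
    (hg : ∀ i, i ≠ 0 → g i = b) : commPoly (m + 1) g = (⁅·, b⁆)^[m] (g 0) :=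
  commPoly_eq_iterate_lie_of_le b m 0 m.zero_le g (fun i hi => hg i (Fin.pos_iff_ne_zero.mp hi))

theorem commPoly_update_succ (a b c : R) (m : ℕ) (k : Fin (m + 1)) (g : Fin (m + 2) → R)
    (hg0 : g 0 = a) (hgk : g k.succ = c) (hg : ∀ i, i ≠ 0 → i ≠ k.succ → g i = b) :
    commPoly (m + 2) g = (⁅·, b⁆)^[m - k] ⁅(⁅·, b⁆)^[k] a, c⁆ := by
  have hbefore : ∀ i : Fin (m + 2), k.succ < i → g i = b := fun i hi =>
    hg i (Fin.ne_of_gt (lt_of_le_of_lt (Fin.zero_le _) hi)) (Fin.ne_of_gt hi)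
  rw [commPoly_eq_iterate_lie_of_le b (m + 1) (k + 1) (by omega) g hbefore,
    Nat.add_sub_add_right, commPoly_succ_succ, commPoly_eq_iterate_lie b k]
  · congr
  · intro i hi
    refine hg _ (fun h => hi (Fin.ext ?_)) (fun h => ?_)
    · simpa using congrArg Fin.val h
    · have := congrArg Fin.val h
      simp at this
      omega

end CommPoly

section RankOne

variable {𝕜 X : Type*} [NontriviallyNormedField 𝕜] [NormedAddCommGroup X] [NormedSpace 𝕜 X]
  {f : X →L[𝕜] 𝕜} {u x z : X}

theorem lie_smulRight_smulRight (hu : f u = 0) :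
    ⁅f.smulRight u, f.smulRight x⁆ = f x • f.smulRight u := by
  ext w
  simp [Ring.lie_def, hu, smul_smul, mul_comm]

theorem iterate_lie_smulRight_smulRight (hu : f u = 0) (j : ℕ) :
    (⁅·, f.smulRight x⁆)^[j] (f.smulRight u) = f x ^ j • f.smulRight u := by
  induction j with
  | zero => simp
  | succ j ih =>
    rw [Function.iterate_succ_apply', ih, Ring.lie_def, smul_mul_assoc, mul_smul_comm,
      ← smul_sub, ← Ring.lie_def, lie_smulRight_smulRight hu, smul_smul, pow_succ]

theorem lie_smulRight_apply_s10 (hz : f z = 0) (T : X →L[𝕜] X) :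
    ⁅T, f.smulRight x⁆ z = -f (T z) • x := by
  simp [Ring.lie_def, hz]

theorem iterate_succ_lie_smulRight_apply (hz : f z = 0) (j : ℕ) (T : X →L[𝕜] X) :
    ((⁅·, f.smulRight x⁆)^[j + 1] T) z = ((-1) ^ (j + 1) * f x ^ j * f (T z)) • x := by
  induction j generalizing T with
  | zero => simp [lie_smulRight_apply_s10 hz]
  | succ j ih =>
    rw [Function.iterate_succ_apply, ih, lie_smulRight_apply_s10 hz]
    simp only [map_smul, smul_eq_mul]
    congr 1
    ring

theorem smulRight_lie_apply (hz : f z = 0) (T : X →L[𝕜] X) :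
    ⁅f.smulRight u, T⁆ z = f (T z) • u := by
  simp [Ring.lie_def, hz]

theorem iterate_lie_smulRight_lie_apply (hu : f u = 0) (hz : f z = 0) (T : X →L[𝕜] X) (j k : ℕ) :
    ((⁅·, f.smulRight x⁆)^[j] ⁅(⁅·, f.smulRight x⁆)^[k] (f.smulRight u), T⁆) z =
      if j = 0 then (f x ^ k * f (T z)) • u else 0 := by
  have hsmul : ⁅(⁅·, f.smulRight x⁆)^[k] (f.smulRight u), T⁆ = f x ^ k • ⁅f.smulRight u, T⁆ := by
    rw [iterate_lie_smulRight_smulRight hu, Ring.lie_def, Ring.lie_def, smul_mul_assoc,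
      mul_smul_comm, smul_sub]
  rcases j with _ | j
  · simp [hsmul, smulRight_lie_apply hz, smul_smul]
  · rw [hsmul, iterate_succ_lie_smulRight_apply hz]
    simp [smulRight_lie_apply hz, hu]

end RankOne

theorem IsLieNDerivNU.pow_smul_apply_smulRight {X : Type*} [NormedAddCommGroup X]
    [NormedSpace ℂ X] {𝒜 : NonUnitalSubalgebra ℂ (X →L[ℂ] X)} {m : ℕ}
    {L : ↥𝒜 →ₗ[ℂ] (X →L[ℂ] X)} (hL : IsLieNDerivNU 𝒜 (m + 2) L) {f : X →L[ℂ] ℂ} {u x z : X}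
    (hu : f u = 0) (hz : f z = 0) (hau : f.smulRight u ∈ 𝒜) (hbx : f.smulRight x ∈ 𝒜) :
    f x ^ (m + 1) • L ⟨f.smulRight u, hau⟩ z =
      ((-1) ^ (m + 1) * f x ^ m * f (L ⟨f.smulRight u, hau⟩ z)) • x +
        (f x ^ m * f (L ⟨f.smulRight x, hbx⟩ z)) • u := by
  set a : 𝒜 := ⟨f.smulRight u, hau⟩
  set b : 𝒜 := ⟨f.smulRight x, hbx⟩
  set A : Fin (m + 2) → 𝒜 := fun i => if i = 0 then a else b
  have hA : ∀ i, i ≠ 0 → A i = b := fun i hi => if_neg hi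
  have hcommPoly : commPoly (m + 2) A = f x ^ (m + 1) • a := by
    apply Subtype.ext
    rw [← NonUnitalSubsemiringClass.coe_subtype 𝒜, map_commPoly_s10]
    exact (commPoly_eq_iterate_lie (b : X →L[ℂ] X) _ _
      (fun i hi => congrArg Subtype.val (hA i hi))).trans (iterate_lie_smulRight_smulRight hu _)
  have hterm_zero :
      commPoly (m + 2) (Function.update (fun i => (A i : X →L[ℂ] X)) 0 (L (A 0))) z =
        ((-1) ^ (m + 1) * f x ^ m * f (L a z)) • x := by
    rw [commPoly_eq_iterate_lie (b : X →L[ℂ] X) _ _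
      (fun i hi => by simp [Function.update_of_ne hi, hA i hi])]
    exact iterate_succ_lie_smulRight_apply hz m _
  have hterm_succ : ∀ k : Fin (m + 1),
      commPoly (m + 2) (Function.update (fun i => (A i : X →L[ℂ] X)) k.succ (L (A k.succ))) z =
        if k = Fin.last m then (f x ^ m * f (L b z)) • u else 0 := by
    intro k
    rw [commPoly_update_succ (a : X →L[ℂ] X) b (L b) m k _
        (Function.update_of_ne (Fin.succ_ne_zero k).symm _ _)
        (by simp [hA _ (Fin.succ_ne_zero k)])
        (fun i hi hik => by simp [Function.update_of_ne hik, hA i hi]),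
      iterate_lie_smulRight_lie_apply hu hz]
    by_cases hk : k = Fin.last m
    · simp [hk]
    · have : m - k ≠ 0 := by have := Fin.val_lt_last hk; omega
      simp [hk, this]
  have h := congrArg (· z) (hL A)
  rw [hcommPoly, map_smul, Fin.sum_univ_succ] at h
  simpa only [smul_apply, add_apply, sum_apply, hterm_zero, hterm_succ, Finset.sum_ite_eq',
    Finset.mem_univ, if_true] using h

section LinearAlgebra

universe u v

variable {K : Type u} {V : Type v} [Field K] [AddCommGroup V] [Module K V]

theorem exists_mem_ker_forall_smul_ne (hV : 2 < Module.rank K V) (f : V →ₗ[K] K) {u : V}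
    (hu : f u = 0) : ∃ w, f w = 0 ∧ ∀ c : K, c • u ≠ w := by
  by_contra! h
  have hker : Module.rank K (LinearMap.ker f) ≤ 1 :=
    rank_le_one_iff.mpr ⟨⟨u, hu⟩, fun ⟨w, hw⟩ => (h w hw).imp fun _ hc => Subtype.ext hc⟩
  have hrange : Module.rank K (LinearMap.range f) ≤ 1 :=
    (Submodule.rank_le _).trans (CommSemiring.rank_self K).le
  have : Cardinal.lift.{u} (Module.rank K V) ≤ 2 := by
    rw [← f.lift_rank_range_add_rank_ker, ← one_add_one_eq_two]
    exact add_le_add (by simpa using hrange) (by simpa using hker)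
  exact hV.not_ge (by simpa using this)

variable {f : V →ₗ[K] K} {ε : K} {x₀ : V}

theorem apply_mem_ker_of_forall_eq_smul_add_smul (hV : 2 < Module.rank K V) {ψ : V → V}
    (hε : ε ≠ 0)
    (hψ : ∀ u x, f u = 0 → f x = 1 → ψ u = (ε * f (ψ u)) • x + f (ψ x) • u)
    (hx₀ : f x₀ = 1) {u : V} (hu : f u = 0) : f (ψ u) = 0 := by
  obtain ⟨w, hw, hwu⟩ := exists_mem_ker_forall_smul_ne hV f hu
  have h₁ := hψ u x₀ hu hx₀
  have h₂ := hψ u (x₀ + w) hu (by simp [hx₀, hw])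
  by_contra hα
  have : (ε * f (ψ u)) • w = (f (ψ x₀) - f (ψ (x₀ + w))) • u := by
    linear_combination (norm := module) h₁ - h₂
  exact hwu ((ε * f (ψ u))⁻¹ * (f (ψ x₀) - f (ψ (x₀ + w))))
    (by rw [mul_smul, ← this, inv_smul_smul₀ (mul_ne_zero hε hα)])

theorem apply_eq_smul_of_forall_eq_smul_add_smul (hV : 2 < Module.rank K V) {ψ : V → V}
    (hε : ε ≠ 0)
    (hψ : ∀ u x, f u = 0 → f x = 1 → ψ u = (ε * f (ψ u)) • x + f (ψ x) • u)
    (hx₀ : f x₀ = 1) {u : V} (hu : f u = 0) : ψ u = f (ψ x₀) • u := by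
  simpa [apply_mem_ker_of_forall_eq_smul_add_smul hV hε hψ hx₀ hu] using hψ u x₀ hu hx₀

theorem apply_apply_eq_mul_of_forall_eq_smul_add_smul (hV : 2 < Module.rank K V) {ψ : V →ₗ[K] V}
    (hε : ε ≠ 0)
    (hψ : ∀ u x, f u = 0 → f x = 1 → ψ u = (ε * f (ψ u)) • x + f (ψ x) • u)
    (hx₀ : f x₀ = 1) (x : V) : f (ψ x) = f x * f (ψ x₀) := by
  have hker : f (x - f x • x₀) = 0 := by simp [hx₀]
  have hsplit : x = f x • x₀ + (x - f x • x₀) := by abel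
  conv_lhs => rw [hsplit]
  simp only [map_add, map_smul, smul_eq_mul,
    apply_mem_ker_of_forall_eq_smul_add_smul hV hε hψ hx₀ hker, add_zero]

theorem eq_of_apply_sub_smul_eq_smul (hV : 2 < Module.rank K V) {ψ : V →ₗ[K] V}
    (hε : ε ≠ 0)
    (hψ : ∀ u x, f u = 0 → f x = 1 → ψ u = (ε * f (ψ u)) • x + f (ψ x) • u)
    (hx₀ : f x₀ = 1) {x z : V} (hx : x ≠ 0) (hz : f z = 0) {s c : K} (hs : f x = 0 → s = 0)
    (h : ψ x - s • z = c • x) : c = f (ψ x₀) := by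
  by_cases hfx : f x = 0
  · rw [hs hfx, zero_smul, sub_zero,
      apply_eq_smul_of_forall_eq_smul_add_smul hV hε hψ hx₀ hfx] at h
    exact (smul_left_injective K hx h).symm
  · have := congrArg f h
    rw [map_sub, map_smul, map_smul, hz, smul_zero, sub_zero,
      apply_apply_eq_mul_of_forall_eq_smul_add_smul hV hε hψ hx₀, smul_eq_mul] at this
    exact (mul_right_cancel₀ hfx ((mul_comm _ _).trans this)).symm

end LinearAlgebra

theorem statement10_general {X : Type*} [NormedAddCommGroup X] [NormedSpace ℂ X]
    (hdim : 2 < Module.rank ℂ X)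
    (𝒩 : Set (Submodule ℂ X))
    (𝒜 : NonUnitalSubalgebra ℂ (X →L[ℂ] X))
    -- (♠3) : `x ⊗ f ∈ 𝒜` for every `x ∈ X(𝒜)` and `f ∈ X₋^⊥(𝒜)`
    (hS3 : ∀ x ∈ XofA 𝒜, ∀ f ∈ XannA 𝒩 𝒜, f.smulRight x ∈ 𝒜)
    -- (♠5) : `X(𝒜) = X`
    (hS5 : XofA 𝒜 = Set.univ)
    (n : ℕ) (hn : 2 ≤ n)
    (L : ↥𝒜 →ₗ[ℂ] (X →L[ℂ] X)) (hL : IsLieNDerivNU 𝒜 n L) :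
    ∀ f ∈ XannA 𝒩 𝒜, f ≠ 0 → ∀ x₁ x₂ : X, x₁ ≠ 0 → x₂ ≠ 0 → ∀ z : X, f z = 0 →
      ∀ (hm₁ : f.smulRight x₁ ∈ 𝒜) (hm₂ : f.smulRight x₂ ∈ 𝒜), ∀ c₁ c₂ : ℂ,
        (L ⟨f.smulRight x₁, hm₁⟩) z - hAux 𝒜 L x₁ f • z = c₁ • x₁ →
        (L ⟨f.smulRight x₂, hm₂⟩) z - hAux 𝒜 L x₂ f • z = c₂ • x₂ →
        c₁ = c₂ := by
  intro f hf hf0 x₁ x₂ hx₁ hx₂ z hz hm₁ hm₂ c₁ c₂ hc₁ hc₂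
  obtain ⟨m, rfl⟩ : ∃ m, n = m + 2 := ⟨n - 2, by omega⟩
  have hmem : ∀ y, f.smulRight y ∈ 𝒜 := fun y => hS3 y (hS5 ▸ trivial) f hf
  obtain ⟨x₀, hx₀⟩ : ∃ x₀, f x₀ = 1 :=
    LinearMap.surjective_iff_ne_zero.mpr (by exact_mod_cast hf0) 1
  let ψ : X →ₗ[ℂ] X := (ContinuousLinearMap.apply ℂ X z).toLinearMap ∘ₗ L ∘ₗ
    (ContinuousLinearMap.smulRightL ℂ X X f).toLinearMap.codRestrict 𝒜.toSubmodule hmem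
  have hψ_apply : ∀ y, ψ y = L ⟨f.smulRight y, hmem y⟩ z := fun _ => rfl
  have hψ : ∀ u x, f u = 0 → f x = 1 → ψ u = ((-1) ^ (m + 1) * f (ψ u)) • x + f (ψ x) • u :=
    fun u x hu hx => by
      simpa [hx, hψ_apply] using hL.pow_smul_apply_smulRight hu hz (hmem u) (hmem x)
  have hc : ∀ x (hm : f.smulRight x ∈ 𝒜) c, x ≠ 0 →
      L ⟨f.smulRight x, hm⟩ z - hAux 𝒜 L x f • z = c • x → c = f (ψ x₀) :=
    fun x _ _ hx => eq_of_apply_sub_smul_eq_smul hdim (by simp) hψ hx₀ hx hz (fun h => if_pos h)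
  rw [hc x₁ hm₁ c₁ hx₁ hc₁, hc x₂ hm₂ c₂ hx₂ hc₂]

/-- (Lemma 3.8 of the paper.)  The scalar `c` with
`(L(x ⊗ f) - h(x,f) I) z = c x` does not depend on the choice of the nonzero vector
`x`. -/
theorem statement10 {X : Type*} [NormedAddCommGroup X] [NormedSpace ℂ X] [CompleteSpace X]
    (hdim : 2 < Module.rank ℂ X)
    (𝒩 : Set (Submodule ℂ X)) (hnest : IsNest 𝒩)
    (hnontrivial : 𝒩 ≠ ({⊥, ⊤} : Set (Submodule ℂ X)))
    (hdimann : 1 < Module.rank ℂ ↥(annihilatorOf (nestXminus 𝒩)))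
    (𝒜 : NonUnitalSubalgebra ℂ (X →L[ℂ] X))
    (h𝒜 : ∀ T ∈ 𝒜, T ∈ nestAlgebra 𝒩)
    -- (♠1) : `X₋^⊥(𝒜) ≠ {0}` and `X₋^⊥(𝒜)` is a linear subspace of `X*`
    (hS1 : XannA 𝒩 𝒜 ≠ ({0} : Set (X →L[ℂ] ℂ)) ∧
      ∃ p : Submodule ℂ (X →L[ℂ] ℂ), (p : Set (X →L[ℂ] ℂ)) = XannA 𝒩 𝒜)
    -- (♠2) : for each `f ∈ X₋^⊥(𝒜)` there exists `y ∈ X \ X₋` with `y ⊗ f ∈ 𝒜`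
    (hS2 : ∀ f ∈ XannA 𝒩 𝒜, ∃ y : X, y ∉ nestXminus 𝒩 ∧ f.smulRight y ∈ 𝒜)
    -- (♠3) : `x ⊗ f ∈ 𝒜` for every `x ∈ X(𝒜)` and `f ∈ X₋^⊥(𝒜)`
    (hS3 : ∀ x ∈ XofA 𝒜, ∀ f ∈ XannA 𝒩 𝒜, f.smulRight x ∈ 𝒜)
    -- (♠4) : `dim(X(𝒜) ∩ ker fᵢ) > 1` and `X(𝒜) ∩ ker f₁ ∩ ker f₂ ≠ {0}`
    (hS4 : ∀ f₁ ∈ XannA 𝒩 𝒜, ∀ f₂ ∈ XannA 𝒩 𝒜,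
      (∃ u v : X, u ∈ XofA 𝒜 ∧ f₁ u = 0 ∧ v ∈ XofA 𝒜 ∧ f₁ v = 0 ∧
        LinearIndependent ℂ ![u, v]) ∧
      (∃ u v : X, u ∈ XofA 𝒜 ∧ f₂ u = 0 ∧ v ∈ XofA 𝒜 ∧ f₂ v = 0 ∧
        LinearIndependent ℂ ![u, v]) ∧
      (∃ z : X, z ≠ 0 ∧ z ∈ XofA 𝒜 ∧ f₁ z = 0 ∧ f₂ z = 0))
    -- (♠5) : `X(𝒜) = X`
    (hS5 : XofA 𝒜 = Set.univ)
    (n : ℕ) (hn : 2 ≤ n)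
    (L : ↥𝒜 →ₗ[ℂ] (X →L[ℂ] X)) (hL : IsLieNDerivNU 𝒜 n L) :
    ∀ f ∈ XannA 𝒩 𝒜, f ≠ 0 → ∀ x₁ x₂ : X, x₁ ≠ 0 → x₂ ≠ 0 → ∀ z : X, f z = 0 →
      ∀ (hm₁ : f.smulRight x₁ ∈ 𝒜) (hm₂ : f.smulRight x₂ ∈ 𝒜), ∀ c₁ c₂ : ℂ,
        (L ⟨f.smulRight x₁, hm₁⟩) z - hAux 𝒜 L x₁ f • z = c₁ • x₁ →
        (L ⟨f.smulRight x₂, hm₂⟩) z - hAux 𝒜 L x₂ f • z = c₂ • x₂ →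
        c₁ = c₂ :=
  statement10_general hdim 𝒩 𝒜 hS3 hS5 n hn L hL
end
end

section
/- Let X be a complex Banach space with dim X > 2, let 𝒩 be a non-trivial nest on X with dim X_-^⊥ > 1, let 𝒜 be a subalgebra of Alg 𝒩 satisfying (♠1)–(♠5), let n ≥ 2, and let L : 𝒜 → B(X) be a Lie n-derivation. Then for every f ∈ X_-^⊥(𝒜)∖{0}, every y ∈ X with f(y) = 1, and every z ∈ X with f(z) = 0, one has f(L(z⊗f)y) + f(L(y⊗f)z) = 0. -/
open scoped Classical

set_option synthInstance.maxHeartbeats 1000000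
set_option maxHeartbeats 1000000

noncomputable section

lemma commPoly_qp {A : Type*} [NonUnitalNonAssocRing A] (q p : A)
    (h : q * p - p * q = q) :
    ∀ m : ℕ, commPoly (m + 1) (fun i : Fin (m + 1) => if i = 0 then q else p) = q := by
  intro m
  induction m with
  | zero => simp [commPoly]
  | succ k ih =>
      have h1 : (fun i : Fin (k + 1) =>
          (fun j : Fin (k + 2) => if j = 0 then q else p) i.castSucc)
          = fun i : Fin (k + 1) => if i = 0 then q else p := by
        funext i
        simp [Fin.castSucc_eq_zero_iff]
      have h2 : (fun j : Fin (k + 2) => if j = 0 then q else p) (Fin.last (k + 1)) = p := by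
        have : (Fin.last (k + 1)) ≠ (0 : Fin (k + 2)) := by
          simp [Fin.ext_iff]
        simp [this]
      show commPoly (k + 1) _ * _ - _ * commPoly (k + 1) _ = q
      rw [h1, h2, ih, h]

/-- (Lemma 3.10 of the paper.)  For every nonzero `f ∈ X₋^⊥(𝒜)`,
every `y` with `f(y) = 1` and every `z` with `f(z) = 0`, one has
`f(L(z ⊗ f) y) + f(L(y ⊗ f) z) = 0`. -/
theorem statement12 {X : Type*} [NormedAddCommGroup X] [NormedSpace ℂ X] [CompleteSpace X]
    (hdim : 2 < Module.rank ℂ X)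
    (𝒩 : Set (Submodule ℂ X)) (hnest : IsNest 𝒩)
    (hnontrivial : 𝒩 ≠ ({⊥, ⊤} : Set (Submodule ℂ X)))
    (hdimann : 1 < Module.rank ℂ ↥(annihilatorOf (nestXminus 𝒩)))
    (𝒜 : NonUnitalSubalgebra ℂ (X →L[ℂ] X))
    (h𝒜 : ∀ T ∈ 𝒜, T ∈ nestAlgebra 𝒩)
    -- (♠1) : `X₋^⊥(𝒜) ≠ {0}` and `X₋^⊥(𝒜)` is a linear subspace of `X*`
    (hS1 : XannA 𝒩 𝒜 ≠ ({0} : Set (X →L[ℂ] ℂ)) ∧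
      ∃ p : Submodule ℂ (X →L[ℂ] ℂ), (p : Set (X →L[ℂ] ℂ)) = XannA 𝒩 𝒜)
    -- (♠2) : for each `f ∈ X₋^⊥(𝒜)` there exists `y ∈ X \ X₋` with `y ⊗ f ∈ 𝒜`
    (hS2 : ∀ f ∈ XannA 𝒩 𝒜, ∃ y : X, y ∉ nestXminus 𝒩 ∧ f.smulRight y ∈ 𝒜)
    -- (♠3) : `x ⊗ f ∈ 𝒜` for every `x ∈ X(𝒜)` and `f ∈ X₋^⊥(𝒜)`
    (hS3 : ∀ x ∈ XofA 𝒜, ∀ f ∈ XannA 𝒩 𝒜, f.smulRight x ∈ 𝒜)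
    -- (♠4) : `dim(X(𝒜) ∩ ker fᵢ) > 1` and `X(𝒜) ∩ ker f₁ ∩ ker f₂ ≠ {0}`
    (hS4 : ∀ f₁ ∈ XannA 𝒩 𝒜, ∀ f₂ ∈ XannA 𝒩 𝒜,
      (∃ u v : X, u ∈ XofA 𝒜 ∧ f₁ u = 0 ∧ v ∈ XofA 𝒜 ∧ f₁ v = 0 ∧
        LinearIndependent ℂ ![u, v]) ∧
      (∃ u v : X, u ∈ XofA 𝒜 ∧ f₂ u = 0 ∧ v ∈ XofA 𝒜 ∧ f₂ v = 0 ∧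
        LinearIndependent ℂ ![u, v]) ∧
      (∃ z : X, z ≠ 0 ∧ z ∈ XofA 𝒜 ∧ f₁ z = 0 ∧ f₂ z = 0))
    -- (♠5) : `X(𝒜) = X`
    (hS5 : XofA 𝒜 = Set.univ)
    (n : ℕ) (hn : 2 ≤ n)
    (L : ↥𝒜 →ₗ[ℂ] (X →L[ℂ] X)) (hL : IsLieNDerivNU 𝒜 n L) :
    ∀ f ∈ XannA 𝒩 𝒜, f ≠ 0 → ∀ y z : X, f y = 1 → f z = 0 →
      ∀ (hmz : f.smulRight z ∈ 𝒜) (hmy : f.smulRight y ∈ 𝒜),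
        f ((L ⟨f.smulRight z, hmz⟩) y) + f ((L ⟨f.smulRight y, hmy⟩) z) = 0 := by
  intro f hf hfne y z hfy hfz hmz hmy
  obtain ⟨m, rfl⟩ : ∃ m, n = m + 2 := ⟨n - 2, by omega⟩
  set P : X →L[ℂ] X := f.smulRight y with hP
  set Q : X →L[ℂ] X := f.smulRight z with hQ
  have hQP : Q * P - P * Q = Q := by
    ext x
    simp [hP, hQ, ContinuousLinearMap.mul_apply, hfy, hfz, smul_smul]
  set q : 𝒜 := ⟨Q, hmz⟩ with hq
  set p : 𝒜 := ⟨P, hmy⟩ with hp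
  have hqp : q * p - p * q = q := Subtype.ext (by simpa using hQP)
  set a : Fin (m + 2) → 𝒜 := fun i => if i = 0 then q else p with ha
  have hcomm : commPoly (m + 2) a = q := commPoly_qp q p hqp (m + 1)
  have hmain := hL a
  rw [hcomm] at hmain
  have hfP : ∀ v, f (P v) = f v := by
    intro v; simp [hP, hfy, smul_eq_mul]
  have hPy : P y = y := by simp [hP, hfy]
  have hfQ : ∀ v, f (Q v) = 0 := by
    intro v; simp [hQ, hfz, smul_eq_mul]
  have hQy : Q y = z := by simp [hQ, hfy]
  have key0 : ∀ C : X →L[ℂ] X, f ((C * P - P * C) y) = 0 := by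
    intro C
    simp [ContinuousLinearMap.sub_apply, ContinuousLinearMap.mul_apply, hPy, hfP]
  have halastne : (Fin.last (m + 1)) ≠ (0 : Fin (m + 2)) := by
    simp [Fin.ext_iff]
  have halast : a (Fin.last (m + 1)) = p := by simp [ha, halastne]
  -- evaluate f (· y) on both sides
  have heval := congrArg (fun T : X →L[ℂ] X => f (T y)) hmain
  simp only [ContinuousLinearMap.coe_sum', Finset.sum_apply, map_sum] at heval
  -- compute each summand
  have hterm : ∀ k : Fin (m + 2),
      f ((commPoly (m + 2)
        (Function.update (fun i => ((a i : X →L[ℂ] X))) k (L (a k)))) y)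
      = if k = Fin.last (m + 1) then -f ((L p) z) else 0 := by
    intro k
    set b := Function.update (fun i => ((a i : X →L[ℂ] X))) k (L (a k)) with hb
    by_cases hk : k = Fin.last (m + 1)
    · subst hk
      have hblast : b (Fin.last (m + 1)) = L p := by
        rw [hb, halast]; simp
      have hbcast : (fun i : Fin (m + 1) => b i.castSucc)
          = fun i : Fin (m + 1) => if i = 0 then Q else P := by
        funext i
        have hne : i.castSucc ≠ Fin.last (m + 1) := (Fin.castSucc_lt_last i).ne
        rw [hb, Function.update_of_ne hne]
        by_cases hi : i = 0
        · simp [ha, hi, Fin.castSucc_eq_zero_iff, hq]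
        · have : i.castSucc ≠ 0 := by
            simpa [Fin.castSucc_eq_zero_iff] using hi
          simp [ha, hi, this, hp]
      have : commPoly (m + 2) b
          = commPoly (m + 1) (fun i => b i.castSucc) * b (Fin.last (m + 1)) -
              b (Fin.last (m + 1)) * commPoly (m + 1) (fun i => b i.castSucc) := rfl
      rw [this, hbcast, commPoly_qp Q P hQP m, hblast]
      simp [ContinuousLinearMap.sub_apply, ContinuousLinearMap.mul_apply, hfQ, hQy]
    · have hblast : b (Fin.last (m + 1)) = P := by
        rw [hb, Function.update_of_ne (Ne.symm hk), halast, hp]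
      have : commPoly (m + 2) b
          = commPoly (m + 1) (fun i => b i.castSucc) * b (Fin.last (m + 1)) -
              b (Fin.last (m + 1)) * commPoly (m + 1) (fun i => b i.castSucc) := rfl
      rw [this, hblast, if_neg hk]
      exact key0 _
  rw [Finset.sum_congr rfl (fun k _ => hterm k)] at heval
  rw [Finset.sum_ite_eq' Finset.univ (Fin.last (m + 1))
    (fun _ => -f ((L p) z))] at heval
  simp only [Finset.mem_univ, if_true] at heval
  have : f ((L q) y) = -f ((L p) z) := heval
  rw [hq, hp] at this
  linear_combination this
end
end
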